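/- arXiv:2512.21254 — 3 statements merged into one kernel-verified Lean document; each statement's English description precedes it below -/
import Mathlib

section
/- For p ∈ [1/2,1), q = 1-p, and d ≥ 1: E[1/N_d] = ∫₀¹ u^{d-1} (p - q u²)/(p + q u²) du, where N_d is the first hitting time of level d by the biased ±1 random walk. -/
open MeasureTheory ProbabilityTheory Real

/-- Partial sums of the walk: `S n = X 0 + ⋯ + X (n-1)`. -/
def walkSum {Ω : Type*} (X : ℕ → Ω → ℤ) (n : ℕ) (ω : Ω) : ℤ :=
  ∑ k ∈ Finset.range n, X k ω

/-- First hitting time of level `d` (junk value `0` if the level is never hit). -/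
noncomputable def hitTime {Ω : Type*} (X : ℕ → Ω → ℤ) (d : ℤ) (ω : Ω) : ℕ :=
  sInf {n : ℕ | walkSum X n ω = d}

/-- Number of `+1` steps ("wins") among the first `n` steps. -/
def wins {Ω : Type*} (X : ℕ → Ω → ℤ) (n : ℕ) (ω : Ω) : ℕ :=
  ((Finset.range n).filter (fun k => X k ω = 1)).card

section helpers

lemma sum_range_ite {M : Type*} [AddCommMonoid M] (f : ℕ → M) {m n : ℕ} (h : m ≤ n) :
    ∑ k ∈ Finset.range n, (if k < m then f k else 0) = ∑ k ∈ Finset.range m, f k := by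
  rw [← Finset.sum_filter]
  congr 1
  ext k
  simp only [Finset.mem_filter, Finset.mem_range]
  omega

variable {Ω : Type*}

lemma walkSum_zero (X : ℕ → Ω → ℤ) (ω : Ω) : walkSum X 0 ω = 0 := by
  simp [walkSum]

lemma walkSum_succ (X : ℕ → Ω → ℤ) (n : ℕ) (ω : Ω) :
    walkSum X (n+1) ω = walkSum X n ω + X n ω := by
  simp [walkSum, Finset.sum_range_succ]

lemma measurable_walkSum [MeasurableSpace Ω] {X : ℕ → Ω → ℤ}
    (hmeas : ∀ n, Measurable (X n)) (n : ℕ) : Measurable (walkSum X n) := by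
  unfold walkSum
  exact Finset.measurable_sum _ (fun k _ => hmeas k)

lemma measurable_hitTime [MeasurableSpace Ω] {X : ℕ → Ω → ℤ}
    (hmeas : ∀ n, Measurable (X n)) {d : ℤ} (hd : d ≠ 0) :
    Measurable (hitTime X d) := by
  apply measurable_to_countable'
  intro n
  rcases Nat.eq_zero_or_pos n with rfl | hn
  · have : hitTime X d ⁻¹' {0} = ⋂ k, {ω | walkSum X k ω ≠ d} := by
      ext ω
      simp only [Set.mem_preimage, Set.mem_singleton_iff, Set.mem_iInter, Set.mem_setOf_eq,
        hitTime]
      constructor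
      · intro h k hk
        have hne : {n : ℕ | walkSum X n ω = d}.Nonempty := ⟨k, hk⟩
        have := Nat.sInf_mem hne
        rw [h] at this
        simp only [Set.mem_setOf_eq, walkSum_zero] at this
        exact hd this.symm
      · intro h
        have : {n : ℕ | walkSum X n ω = d} = ∅ := by
          ext k; simp [h k]
        rw [this, Nat.sInf_empty]
    rw [this]
    exact MeasurableSet.iInter fun k =>
      ((measurable_walkSum hmeas k) (measurableSet_singleton d)).compl
  · have : hitTime X d ⁻¹' {n} =
        {ω | walkSum X n ω = d} ∩ ⋂ k ∈ Finset.range n, {ω | walkSum X k ω ≠ d} := by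
      ext ω
      simp only [Set.mem_preimage, Set.mem_singleton_iff, Set.mem_inter_iff, Set.mem_setOf_eq,
        Set.mem_iInter, Finset.mem_range, hitTime]
      constructor
      · intro h
        have hne : {m : ℕ | walkSum X m ω = d}.Nonempty := by
          by_contra hne
          rw [Set.not_nonempty_iff_eq_empty] at hne
          rw [hne, Nat.sInf_empty] at h
          omega
        have hmem := Nat.sInf_mem hne
        rw [h] at hmem
        refine ⟨hmem, fun k hk hkd => ?_⟩
        have := Nat.sInf_le (show k ∈ {m : ℕ | walkSum X m ω = d} from hkd)
        omega
      · rintro ⟨h1, h2⟩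
        have h3 : n ∈ {m : ℕ | walkSum X m ω = d} := h1
        refine le_antisymm (Nat.sInf_le h3) ?_
        by_contra hlt
        push_neg at hlt
        have hne : {m : ℕ | walkSum X m ω = d}.Nonempty := ⟨n, h3⟩
        have hmem := Nat.sInf_mem hne
        exact h2 _ hlt hmem
    rw [this]
    refine ((measurable_walkSum hmeas n) (measurableSet_singleton d)).inter ?_
    exact MeasurableSet.biInter (Finset.range n).countable_toSet fun k _ =>
      ((measurable_walkSum hmeas k) (measurableSet_singleton d)).compl

lemma hitTime_le {X : ℕ → Ω → ℤ} {d : ℤ} {ω : Ω} {k : ℕ}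
    (h : walkSum X k ω = d) : hitTime X d ω ≤ k := Nat.sInf_le h

lemma walkSum_hitTime {X : ℕ → Ω → ℤ} {d : ℤ} {ω : Ω}
    (h : ∃ n, walkSum X n ω = d) : walkSum X (hitTime X d ω) ω = d :=
  Nat.sInf_mem h

lemma hitTime_pos {X : ℕ → Ω → ℤ} {d : ℤ} {ω : Ω} (hd : d ≠ 0)
    (h : ∃ n, walkSum X n ω = d) : 1 ≤ hitTime X d ω := by
  rcases Nat.eq_zero_or_pos (hitTime X d ω) with h0 | h1
  · exfalso
    have := walkSum_hitTime h
    rw [h0, walkSum_zero] at this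
    exact hd this.symm
  · exact h1

lemma walkSum_le_of_ne {X : ℕ → Ω → ℤ} {d : ℤ} {ω : Ω} {n : ℕ} (hd : 1 ≤ d)
    (hsteps : ∀ k, X k ω = 1 ∨ X k ω = -1)
    (h : ∀ k, k ≤ n → walkSum X k ω ≠ d) : ∀ k, k ≤ n → walkSum X k ω ≤ d := by
  intro k
  induction k with
  | zero => intro _; rw [walkSum_zero]; omega
  | succ k ih =>
    intro hk
    have h1 : walkSum X k ω ≤ d := ih (by omega)
    have h2 : walkSum X k ω ≠ d := h k (by omega)
    rw [walkSum_succ]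
    rcases hsteps k with h3 | h3 <;> omega

lemma walkSum_le_hitTime {X : ℕ → Ω → ℤ} {d : ℤ} {ω : Ω} (hd : 1 ≤ d)
    (hsteps : ∀ k, X k ω = 1 ∨ X k ω = -1) :
    ∀ k, k ≤ hitTime X d ω → walkSum X k ω ≤ d := by
  intro k
  induction k with
  | zero => intro _; rw [walkSum_zero]; omega
  | succ k ih =>
    intro hk
    have hklt : k < hitTime X d ω := hk
    have h1 : walkSum X k ω ≤ d := ih (le_of_lt hklt)
    have h2 : walkSum X k ω ≠ d := by
      intro h
      have := hitTime_le h
      omega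
    rw [walkSum_succ]
    rcases hsteps k with h3 | h3 <;> omega

lemma ae_steps [MeasurableSpace Ω] (P : Measure Ω) [IsProbabilityMeasure P]
    {p : ℝ} (hp0 : 0 ≤ p) (hp1 : p ≤ 1)
    {X : ℕ → Ω → ℤ} (hmeas : ∀ n, Measurable (X n))
    (hup : ∀ n, P {ω | X n ω = 1} = ENNReal.ofReal p)
    (hdown : ∀ n, P {ω | X n ω = -1} = ENNReal.ofReal (1 - p)) :
    ∀ᵐ ω ∂P, ∀ n, X n ω = 1 ∨ X n ω = -1 := by
  rw [MeasureTheory.ae_all_iff]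
  intro n
  have hA : MeasurableSet {ω | X n ω = 1} := hmeas n (measurableSet_singleton 1)
  have hB : MeasurableSet {ω | X n ω = -1} := hmeas n (measurableSet_singleton (-1))
  have hdisj : Disjoint {ω | X n ω = 1} {ω | X n ω = -1} := by
    rw [Set.disjoint_left]; intro ω h1 h2
    simp only [Set.mem_setOf_eq] at h1 h2; omega
  have hunion : P ({ω | X n ω = 1} ∪ {ω | X n ω = -1}) = 1 := by
    rw [measure_union hdisj hB, hup, hdown, ← ENNReal.ofReal_add hp0 (by linarith)]
    norm_num
  have hcompl : P ({ω | X n ω = 1} ∪ {ω | X n ω = -1})ᶜ = 0 := by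
    rw [measure_compl (hA.union hB) (measure_ne_top _ _), hunion, measure_univ]
    simp
  refine measure_mono_null ?_ hcompl
  intro ω h
  simp only [Set.mem_setOf_eq, Set.mem_compl_iff, Set.mem_union] at *
  tauto

end helpers

open scoped Classical in
lemma integral_ratio_pow_hitTime {Ω : Type*} [MeasurableSpace Ω] (P : Measure Ω)
    [IsProbabilityMeasure P]
    (p : ℝ) (hp : p ∈ Set.Ico (1/2 : ℝ) 1)
    (X : ℕ → Ω → ℤ) (hmeas : ∀ n, Measurable (X n))
    (hindep : iIndepFun X P)
    (hup : ∀ n, P {ω | X n ω = 1} = ENNReal.ofReal p)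
    (hdown : ∀ n, P {ω | X n ω = -1} = ENNReal.ofReal (1 - p))
    (d : ℕ) (hd : 1 ≤ d)
    (hfin : ∀ᵐ ω ∂P, ∃ n, walkSum X n ω = (d : ℤ))
    {u : ℝ} (hu0 : 0 < u) (hu1 : u < 1) :
    ∫ ω, (u / (p + (1 - p) * u ^ 2)) ^ (hitTime X (d : ℤ) ω) ∂P = u ^ d := by
  obtain ⟨hp2, hp1⟩ := hp
  have hq0 : 0 < 1 - p := by linarith
  have hden : 0 < p + (1 - p) * u ^ 2 := by nlinarith
  set t : ℝ := u / (p + (1 - p) * u ^ 2) with ht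
  have ht0 : 0 < t := div_pos hu0 hden
  have ht1 : t < 1 := by
    rw [ht, div_lt_one hden]
    nlinarith [mul_pos (show (0:ℝ) < 1 - u by linarith)
      (show (0:ℝ) < p - (1 - p) * u by nlinarith)]
  have hkey : t * (p / u + (1 - p) * u) = 1 := by
    rw [ht]; field_simp
  set N : Ω → ℕ := hitTime X (d : ℤ) with hN
  have hdz : (d : ℤ) ≠ 0 := Int.natCast_ne_zero.mpr (by omega)
  have hNmeas : Measurable N := measurable_hitTime hmeas hdz
  have hminmeas : ∀ n : ℕ, Measurable (fun ω => min n (N ω)) := fun n =>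
    (measurable_const.min hNmeas)
  have hSmin : ∀ n : ℕ, Measurable (fun ω => walkSum X (min n (N ω)) ω) := by
    intro n
    have heq : (fun ω => walkSum X (min n (N ω)) ω)
        = fun ω => ∑ k ∈ Finset.range n, if k < min n (N ω) then X k ω else 0 := by
      funext ω
      rw [show walkSum X (min n (N ω)) ω = ∑ k ∈ Finset.range (min n (N ω)), X k ω from rfl,
        sum_range_ite _ (min_le_left _ _)]
    rw [heq]
    refine Finset.measurable_sum _ (fun k _ => ?_)
    refine Measurable.ite ?_ (hmeas k) measurable_const
    exact measurableSet_lt measurable_const (hminmeas n)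
  set F : ℕ → Ω → ℝ :=
    fun n ω => t ^ (min n (N ω)) * u ^ (-(walkSum X (min n (N ω)) ω)) with hF
  have hFmeas : ∀ n, Measurable (F n) := by
    intro n
    exact ((measurable_of_countable (fun k : ℕ => t ^ k)).comp (hminmeas n)).mul
      ((measurable_of_countable (fun z : ℤ => u ^ (-z))).comp (hSmin n))
  have hGae : ∀ᵐ ω ∂P, (∀ k, X k ω = 1 ∨ X k ω = -1) ∧ ∃ n, walkSum X n ω = (d : ℤ) :=
    (ae_steps P (by linarith) (by linarith) hmeas hup hdown).and hfin
  have hzd : (0:ℝ) < u ^ (-(d:ℤ)) := zpow_pos hu0 _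
  have hbound : ∀ n : ℕ, ∀ᵐ ω ∂P, ‖F n ω‖ ≤ u ^ (-(d:ℤ)) := by
    intro n
    filter_upwards [hGae] with ω hω
    have hS : walkSum X (min n (N ω)) ω ≤ (d:ℤ) :=
      walkSum_le_hitTime (by exact_mod_cast hd) hω.1 _ (min_le_right _ _)
    have h1 : (0:ℝ) < u ^ (-(walkSum X (min n (N ω)) ω)) := zpow_pos hu0 _
    have h2 : u ^ (-(walkSum X (min n (N ω)) ω)) ≤ u ^ (-(d:ℤ)) :=
      zpow_le_zpow_right_of_le_one₀ hu0 hu1.le (by omega)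
    have h3 : t ^ (min n (N ω)) ≤ 1 := pow_le_one₀ ht0.le ht1.le
    have h4 : 0 < t ^ (min n (N ω)) := pow_pos ht0 _
    rw [hF, Real.norm_eq_abs, abs_of_nonneg (by positivity)]
    calc t ^ (min n (N ω)) * u ^ (-(walkSum X (min n (N ω)) ω))
        ≤ 1 * u ^ (-(d:ℤ)) := mul_le_mul h3 h2 h1.le zero_le_one
      _ = u ^ (-(d:ℤ)) := one_mul _
  have hFint : ∀ n, Integrable (F n) P :=
    fun n => Integrable.mono' (integrable_const _) (hFmeas n).aestronglyMeasurable (hbound n)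
  have claim : ∀ n, ∫ ω, F n ω ∂P = 1 := by
    intro n
    induction n with
    | zero =>
      have : F 0 = fun _ => 1 := by
        funext ω
        rw [hF]
        simp [walkSum_zero]
      rw [this]
      simp
    | succ n ih =>
      have hA1 : MeasurableSet {ω | X n ω = 1} := hmeas n (measurableSet_singleton 1)
      have hB1 : MeasurableSet {ω | X n ω = -1} := hmeas n (measurableSet_singleton (-1))
      set A' : Set Ω := {ω | ∀ k, k ≤ n → walkSum X k ω ≠ (d:ℤ)} with hA'
      have hA'meas : MeasurableSet A' := by
        have : A' = ⋂ k ∈ Finset.range (n+1), {ω | walkSum X k ω ≠ (d:ℤ)} := by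
          ext ω
          simp only [hA', Set.mem_setOf_eq, Set.mem_iInter, Finset.mem_range]
          constructor
          · intro h k hk; exact h k (by omega)
          · intro h k hk; exact h k (by omega)
        rw [this]
        exact MeasurableSet.biInter (Finset.range (n+1)).countable_toSet fun k _ =>
          ((measurable_walkSum hmeas k) (measurableSet_singleton _)).compl
      set Y : Ω → ℝ := A'.indicator (fun ω => u ^ (-(walkSum X n ω))) with hYdef
      set Z : Ω → ℝ := fun ω => u ^ (-(X n ω)) with hZdef
      have hdiff : ∀ ω, F (n+1) ω - F n ω =
          Set.indicator {ω | n < N ω}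
            (fun ω => t ^ (n+1) * u ^ (-(walkSum X (n+1) ω))
              - t ^ n * u ^ (-(walkSum X n ω))) ω := by
        intro ω
        by_cases hA : n < N ω
        · rw [Set.indicator_of_mem (show ω ∈ {ω | n < N ω} from hA), hF]
          simp only
          rw [min_eq_left (by omega), min_eq_left (by omega)]
        · rw [Set.indicator_of_notMem (show ω ∉ {ω | n < N ω} from hA), hF]
          simp only
          rw [min_eq_right (by omega), min_eq_right (by omega), sub_self]
      have hae : (fun ω => F (n+1) ω - F n ω) =ᵐ[P]
          A'.indicator (fun ω => t ^ (n+1) * u ^ (-(walkSum X (n+1) ω))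
            - t ^ n * u ^ (-(walkSum X n ω))) := by
        filter_upwards [hfin] with ω hω
        rw [hdiff ω]
        have hiff : (n < N ω) ↔ ω ∈ A' := by
          constructor
          · intro h k hk hkd
            have hle := hitTime_le hkd
            rw [← hN] at hle
            omega
          · intro h
            by_contra hc
            push_neg at hc
            refine h (N ω) (by omega) ?_
            rw [hN]
            exact walkSum_hitTime hω
        by_cases hm : ω ∈ A'
        · rw [Set.indicator_of_mem hm,
            Set.indicator_of_mem (show ω ∈ {ω | n < N ω} from hiff.mpr hm)]
        · rw [Set.indicator_of_notMem hm,
            Set.indicator_of_notMem (show ω ∉ {ω | n < N ω} from fun hh => hm (hiff.mp hh))]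
      have hsplit : A'.indicator (fun ω => t ^ (n+1) * u ^ (-(walkSum X (n+1) ω))
            - t ^ n * u ^ (-(walkSum X n ω)))
          = fun ω => t ^ (n+1) * (Y ω * Z ω) - t ^ n * Y ω := by
        funext ω
        by_cases hm : ω ∈ A'
        · rw [Set.indicator_of_mem hm, hYdef, Set.indicator_of_mem hm]
          simp only [hZdef]
          rw [walkSum_succ, neg_add, zpow_add₀ (ne_of_gt hu0)]
        · rw [Set.indicator_of_notMem hm, hYdef, Set.indicator_of_notMem hm]
          simp
      have hYmeas : Measurable Y :=
        (((measurable_of_countable fun z : ℤ => u ^ (-z)).comp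
          (measurable_walkSum hmeas n)).indicator hA'meas)
      have hZmeas : Measurable Z :=
        (measurable_of_countable fun z : ℤ => u ^ (-z)).comp (hmeas n)
      have hYbd : ∀ᵐ ω ∂P, ‖Y ω‖ ≤ u ^ (-(d:ℤ)) := by
        filter_upwards [hGae] with ω hω
        by_cases hm : ω ∈ A'
        · rw [hYdef, Set.indicator_of_mem hm, Real.norm_eq_abs,
            abs_of_nonneg (zpow_pos hu0 _).le]
          refine zpow_le_zpow_right_of_le_one₀ hu0 hu1.le ?_
          have := walkSum_le_of_ne (by exact_mod_cast hd) hω.1 hm n le_rfl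
          omega
        · rw [hYdef, Set.indicator_of_notMem hm]
          simpa using hzd.le
      have hZbd : ∀ᵐ ω ∂P, ‖Z ω‖ ≤ u⁻¹ := by
        filter_upwards [hGae] with ω hω
        rw [hZdef, Real.norm_eq_abs, abs_of_nonneg (zpow_pos hu0 _).le]
        rcases hω.1 n with h | h <;> rw [h]
        · simp [zpow_neg]
        · simp only [neg_neg, zpow_one]
          have hmu : u * u⁻¹ = 1 := mul_inv_cancel₀ (ne_of_gt hu0)
          nlinarith
      have hYint : Integrable Y P :=
        Integrable.mono' (integrable_const _) hYmeas.aestronglyMeasurable hYbd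
      have hZint : Integrable Z P :=
        Integrable.mono' (integrable_const _) hZmeas.aestronglyMeasurable hZbd
      have hYZint : Integrable (fun ω => Y ω * Z ω) P := by
        refine Integrable.mono' (integrable_const (u ^ (-(d:ℤ)) * u⁻¹))
          (hYmeas.mul hZmeas).aestronglyMeasurable ?_
        filter_upwards [hYbd, hZbd] with ω h1 h2
        rw [norm_mul]
        exact mul_le_mul h1 h2 (norm_nonneg _) hzd.le
      have hIndYZ : IndepFun Y Z P := by
        have base := hindep.indepFun_finset (Finset.range n) {n} (by simp) hmeas
        set φ : (↥(Finset.range n) → ℤ) → ℝ := fun v =>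
          if ∀ k, k ≤ n →
              (∑ i ∈ (Finset.range n).attach, if (i:ℕ) < k then v i else 0) ≠ (d:ℤ)
          then u ^ (-(∑ i ∈ (Finset.range n).attach, if (i:ℕ) < n then v i else 0)) else 0
          with hφ
        have hY' : Y = φ ∘ (fun ω (i : ↥(Finset.range n)) => X (i:ℕ) ω) := by
          funext ω
          simp only [Function.comp_apply, hφ]
          have hps' : ∀ k, k ≤ n →
              (∑ i ∈ (Finset.range n).attach, if (i:ℕ) < k then X (i:ℕ) ω else 0)
                = walkSum X k ω := by
            intro k hk
            rw [Finset.sum_attach (Finset.range n) (fun i => if i < k then X i ω else 0),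
              sum_range_ite _ hk]
            rfl
          by_cases hm : ω ∈ A'
          · rw [hYdef, Set.indicator_of_mem hm, if_pos]
            · rw [hps' n le_rfl]
            · intro k hk
              rw [hps' k hk]
              exact hm k hk
          · rw [hYdef, Set.indicator_of_notMem hm, if_neg]
            intro hc
            exact hm (fun k hk => by rw [← hps' k hk]; exact hc k hk)
        have hZ' : Z = (fun v : (↥({n} : Finset ℕ) → ℤ) =>
            u ^ (-(v ⟨n, Finset.mem_singleton_self n⟩)))
            ∘ (fun ω (i : ↥({n} : Finset ℕ)) => X (i:ℕ) ω) := rfl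
        rw [hY', hZ']
        exact base.comp (measurable_of_countable φ) (measurable_of_countable _)
      have hEZ : ∫ ω, Z ω ∂P = p / u + (1 - p) * u := by
        have hZae : Z =ᵐ[P] fun ω => ({ω | X n ω = 1}.indicator (fun _ => u⁻¹) ω
            + {ω | X n ω = -1}.indicator (fun _ => u) ω) := by
          filter_upwards [hGae] with ω hω
          rcases hω.1 n with h | h
          · rw [hZdef]
            simp only
            rw [Set.indicator_of_mem (by exact h),
              Set.indicator_of_notMem (by simp only [Set.mem_setOf_eq, h]; omega), h]
            simp [zpow_neg]
          · rw [hZdef]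
            simp only
            rw [Set.indicator_of_notMem (by simp only [Set.mem_setOf_eq, h]; omega),
              Set.indicator_of_mem (by exact h), h]
            simp
        rw [integral_congr_ae hZae,
          integral_add ((integrable_const _).indicator hA1) ((integrable_const _).indicator hB1),
          integral_indicator_const _ hA1, integral_indicator_const _ hB1,
          measureReal_def, measureReal_def, hup n, hdown n,
          ENNReal.toReal_ofReal (by linarith), ENNReal.toReal_ofReal (by linarith),
          smul_eq_mul, smul_eq_mul, div_eq_mul_inv]
      have hstep : ∫ ω, F (n+1) ω ∂P - ∫ ω, F n ω ∂P = 0 := by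
        rw [← integral_sub (hFint (n+1)) (hFint n), integral_congr_ae hae, hsplit]
        have hsub : ∫ ω, (t ^ (n+1) * (Y ω * Z ω) - t ^ n * Y ω) ∂P
            = t ^ (n+1) * ∫ ω, Y ω * Z ω ∂P - t ^ n * ∫ ω, Y ω ∂P := by
          rw [integral_sub (hYZint.const_mul _) (hYint.const_mul _),
            integral_const_mul, integral_const_mul]
        rw [hsub]
        have hmul : ∫ ω, Y ω * Z ω ∂P = (∫ ω, Y ω ∂P) * ∫ ω, Z ω ∂P :=
          hIndYZ.integral_fun_mul_eq_mul_integral hYint.aestronglyMeasurable hZint.aestronglyMeasurable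
        rw [hmul, hEZ]
        have hexp : t ^ (n+1) * ((∫ ω, Y ω ∂P) * (p / u + (1 - p) * u))
            = t ^ n * ((∫ ω, Y ω ∂P) * (t * (p / u + (1 - p) * u))) := by ring
        rw [hexp, hkey, mul_one]
        ring
      linarith [hstep, ih]
  have hlim : ∀ᵐ ω ∂P, Filter.Tendsto (fun n => F n ω) Filter.atTop
      (nhds (t ^ (N ω) * u ^ (-(d:ℤ)))) := by
    filter_upwards [hGae] with ω hω
    have hev : ∀ n ≥ N ω, F n ω = t ^ (N ω) * u ^ (-(d:ℤ)) := by
      intro n hn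
      rw [hF]
      simp only
      rw [min_eq_right hn, hN, walkSum_hitTime hω.2]
    exact tendsto_atTop_of_eventually_const hev
  have hDCT := MeasureTheory.tendsto_integral_of_dominated_convergence _
    (fun n => (hFmeas n).aestronglyMeasurable) (integrable_const _) hbound hlim
  have h1 : (∫ ω, t ^ (N ω) * u ^ (-(d:ℤ)) ∂P) = 1 := by
    have hconst : (fun n : ℕ => ∫ ω, F n ω ∂P) = fun _ : ℕ => (1:ℝ) := by
      funext n; exact claim n
    rw [hconst] at hDCT
    exact tendsto_nhds_unique hDCT tendsto_const_nhds
  rw [integral_mul_const, zpow_neg, zpow_natCast, ← div_eq_mul_inv] at h1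
  exact (div_eq_one_iff_eq (pow_ne_zero _ (ne_of_gt hu0))).mp h1

set_option maxHeartbeats 1000000 in
/-- `E[1/N_d] = ∫₀¹ u^(d-1) (p - qu²)/(p + qu²) du`. -/
theorem stmt_5 {Ω : Type*} [MeasurableSpace Ω] (P : Measure Ω) [IsProbabilityMeasure P]
    (p : ℝ) (hp : p ∈ Set.Ico (1/2 : ℝ) 1)
    (X : ℕ → Ω → ℤ) (hmeas : ∀ n, Measurable (X n))
    (hindep : iIndepFun X P)
    (hup : ∀ n, P {ω | X n ω = 1} = ENNReal.ofReal p)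
    (hdown : ∀ n, P {ω | X n ω = -1} = ENNReal.ofReal (1 - p))
    (d : ℕ) (hd : 1 ≤ d)
    (hfin : ∀ᵐ ω ∂P, ∃ n, walkSum X n ω = (d : ℤ)) :
    ∫ ω, (1 : ℝ) / (hitTime X (d : ℤ) ω) ∂P
      = ∫ u in (0:ℝ)..1, u ^ (d - 1) * ((p - (1 - p) * u ^ 2) / (p + (1 - p) * u ^ 2)) := by
  obtain ⟨hp2, hp1⟩ := hp
  have hq0 : 0 < 1 - p := by linarith
  set N : Ω → ℕ := hitTime X (d : ℤ) with hN
  have hdz : (d : ℤ) ≠ 0 := Int.natCast_ne_zero.mpr (by omega)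
  have hNmeas : Measurable N := measurable_hitTime hmeas hdz
  set g : ℝ → ℝ := fun x => x / (p + (1 - p) * x ^ 2) with hg
  set g' : ℝ → ℝ := fun x => (p - (1 - p) * x ^ 2) / (p + (1 - p) * x ^ 2) ^ 2 with hg'
  have hdenpos : ∀ x : ℝ, 0 < p + (1 - p) * x ^ 2 := fun x => by nlinarith [sq_nonneg x]
  have hcontden : Continuous fun x : ℝ => p + (1 - p) * x ^ 2 := by continuity
  have hgcont : Continuous g :=
    continuous_id.div hcontden (fun x => ne_of_gt (hdenpos x))
  have hg'cont : Continuous g' :=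
    Continuous.div (by continuity) (hcontden.pow 2)
      (fun x => pow_ne_zero _ (ne_of_gt (hdenpos x)))
  have hgderiv : ∀ x : ℝ, HasDerivAt g (g' x) x := by
    intro x
    have h1 : HasDerivAt (fun x : ℝ => x) 1 x := hasDerivAt_id x
    have h2 : HasDerivAt (fun x : ℝ => p + (1 - p) * x ^ 2) ((1 - p) * (2 * x)) x := by
      have h3 := ((hasDerivAt_pow 2 x).const_mul (1 - p)).const_add p
      simpa using h3
    have h4 := h1.div h2 (ne_of_gt (hdenpos x))
    refine h4.congr_deriv ?_
    rw [hg']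
    field_simp
    ring
  -- bounds for g, g' on (0,1]
  have hgpos : ∀ x : ℝ, 0 < x → 0 < g x := fun x hx => div_pos hx (hdenpos x)
  have hgle : ∀ x : ℝ, 0 < x → x ≤ 1 → g x ≤ 1 := by
    intro x hx0 hx1
    rw [hg, div_le_one (hdenpos x)]
    nlinarith [mul_nonneg (by linarith : (0:ℝ) ≤ 1 - x)
      (by nlinarith : (0:ℝ) ≤ p - (1 - p) * x)]
  have hg'nonneg : ∀ x : ℝ, 0 ≤ x → x ≤ 1 → 0 ≤ g' x := by
    intro x hx0 hx1
    rw [hg']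
    apply div_nonneg _ (sq_nonneg _)
    nlinarith [sq_nonneg x]
  have hg'le : ∀ x : ℝ, 0 ≤ x → g' x ≤ 2 := by
    intro x hx0
    rw [hg', div_le_iff₀ (pow_pos (hdenpos x) 2)]
    nlinarith [sq_nonneg x, sq_nonneg (p + (1 - p) * x ^ 2), mul_nonneg hq0.le (sq_nonneg x)]
  -- per-n identity
  have hperN : ∀ n : ℕ, 1 ≤ n →
      (1 : ℝ) / n = ∫ x in Set.Ioc (0:ℝ) 1, g' x * g x ^ (n - 1) := by
    intro n hn
    have hsub : (∫ x in (0:ℝ)..1, g' x • ((fun y : ℝ => y ^ (n - 1)) ∘ g) x)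
        = ∫ y in (g 0)..(g 1), y ^ (n - 1) :=
      intervalIntegral.integral_comp_smul_deriv (fun x _ => hgderiv x)
        hg'cont.continuousOn (continuous_pow _)
    have hg0 : g 0 = 0 := by rw [hg]; simp
    have hg1 : g 1 = 1 := by rw [hg]; norm_num
    rw [hg0, hg1] at hsub
    have hpow : (∫ y in (0:ℝ)..1, y ^ (n - 1)) = 1 / n := by
      rw [integral_pow, one_pow, zero_pow (by omega : n - 1 + 1 ≠ 0)]
      have : ((n - 1 : ℕ) : ℝ) + 1 = (n : ℝ) := by
        push_cast [Nat.cast_sub hn]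
        ring
      rw [this]
      norm_num
    rw [hpow] at hsub
    rw [← hsub, intervalIntegral.integral_of_le zero_le_one]
    apply setIntegral_congr_fun measurableSet_Ioc
    intro x _
    simp [smul_eq_mul]
  have hNae : ∀ᵐ ω ∂P, (1 : ℝ) / (N ω) =
      ∫ x in Set.Ioc (0:ℝ) 1, g' x * g x ^ (N ω - 1) := by
    filter_upwards [hfin] with ω hω
    exact hperN _ (by rw [hN]; exact hitTime_pos hdz hω)
  -- measurability on the product
  have hgmeas : Measurable fun z : Ω × ℝ => g' z.2 * g z.2 ^ (N z.1 - 1) := by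
    have hG : Measurable fun q : ℝ × ℕ => g' q.1 * g q.1 ^ (q.2 - 1) := by
      apply measurable_from_prod_countable_left
      intro n
      exact ((hg'cont.mul (hgcont.pow _)).measurable :
        Measurable fun x : ℝ => g' x * g x ^ (n - 1))
    exact hG.comp (measurable_snd.prodMk (hNmeas.comp measurable_fst))
  haveI : IsFiniteMeasure (volume.restrict (Set.Ioc (0:ℝ) 1)) := by
    constructor
    rw [Measure.restrict_apply_univ, Real.volume_Ioc]
    exact ENNReal.ofReal_lt_top
  have hae2 : ∀ᵐ z : Ω × ℝ ∂(P.prod (volume.restrict (Set.Ioc (0:ℝ) 1))),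
      z.2 ∈ Set.Ioc (0:ℝ) 1 := by
    rw [MeasureTheory.ae_iff]
    have hset : {z : Ω × ℝ | ¬ z.2 ∈ Set.Ioc (0:ℝ) 1}
        = Set.univ ×ˢ (Set.Ioc (0:ℝ) 1)ᶜ := by
      ext z; simp
    rw [hset, Measure.prod_prod, Measure.restrict_apply measurableSet_Ioc.compl]
    simp
  have hIntProd : Integrable (Function.uncurry fun ω x => g' x * g x ^ (N ω - 1))
      (P.prod (volume.restrict (Set.Ioc (0:ℝ) 1))) := by
    refine Integrable.mono' (integrable_const 2) hgmeas.aestronglyMeasurable ?_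
    filter_upwards [hae2] with z hz
    show ‖g' z.2 * g z.2 ^ (N z.1 - 1)‖ ≤ 2
    rw [Real.norm_eq_abs, abs_of_nonneg
      (mul_nonneg (hg'nonneg _ hz.1.le hz.2) (pow_nonneg (hgpos _ hz.1).le _))]
    calc g' z.2 * g z.2 ^ (N z.1 - 1) ≤ 2 * 1 := by
          refine mul_le_mul (hg'le _ hz.1.le) (pow_le_one₀ (hgpos _ hz.1).le
            (hgle _ hz.1 hz.2)) (pow_nonneg (hgpos _ hz.1).le _) (by norm_num)
      _ = 2 := by norm_num
  have hswap : (∫ ω, (∫ x in Set.Ioc (0:ℝ) 1, g' x * g x ^ (N ω - 1)) ∂P)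
      = ∫ x in Set.Ioc (0:ℝ) 1, (∫ ω, g' x * g x ^ (N ω - 1) ∂P) :=
    MeasureTheory.integral_integral_swap hIntProd
  -- inner integral
  have hinner : ∀ᵐ x ∂(volume.restrict (Set.Ioc (0:ℝ) 1)),
      (∫ ω, g' x * g x ^ (N ω - 1) ∂P)
        = x ^ (d - 1) * ((p - (1 - p) * x ^ 2) / (p + (1 - p) * x ^ 2)) := by
    have h1null : (volume.restrict (Set.Ioc (0:ℝ) 1)) {(1:ℝ)} = 0 := by
      rw [Measure.restrict_apply (measurableSet_singleton 1)]
      exact measure_mono_null Set.inter_subset_left (Real.volume_singleton)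
    have hne1 : ∀ᵐ x ∂(volume.restrict (Set.Ioc (0:ℝ) 1)), x ≠ 1 := by
      rw [MeasureTheory.ae_iff]
      simpa using h1null
    filter_upwards [ae_restrict_mem measurableSet_Ioc, hne1] with x hx hx1
    have hx0 : 0 < x := hx.1
    have hxlt1 : x < 1 := lt_of_le_of_ne hx.2 hx1
    have hcore := integral_ratio_pow_hitTime P p ⟨hp2, hp1⟩ X hmeas hindep hup hdown
      d hd hfin hx0 hxlt1
    have hgx0 : 0 < g x := hgpos x hx0
    have haeexp : (fun ω => g x ^ (N ω - 1)) =ᵐ[P] fun ω => g x ^ (N ω) / g x := by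
      filter_upwards [hfin] with ω hω
      have hN1 : 1 ≤ N ω := by rw [hN]; exact hitTime_pos hdz hω
      rw [eq_div_iff (ne_of_gt hgx0), ← pow_succ]
      congr 1
      omega
    rw [integral_const_mul, integral_congr_ae haeexp, integral_div]
    have hcore' : (∫ ω, g x ^ (N ω) ∂P) = x ^ d := by
      rw [hg, hN]
      exact hcore
    rw [hcore', hg', hg]
    have hxd : x ^ d = x ^ (d - 1) * x := by
      rw [← pow_succ]
      congr 1
      omega
    rw [hxd]
    field_simp
  calc ∫ ω, (1 : ℝ) / (N ω) ∂P
      = ∫ ω, (∫ x in Set.Ioc (0:ℝ) 1, g' x * g x ^ (N ω - 1)) ∂P :=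
        integral_congr_ae hNae
    _ = ∫ x in Set.Ioc (0:ℝ) 1, (∫ ω, g' x * g x ^ (N ω - 1) ∂P) := hswap
    _ = ∫ x in Set.Ioc (0:ℝ) 1,
          x ^ (d - 1) * ((p - (1 - p) * x ^ 2) / (p + (1 - p) * x ^ 2)) :=
        integral_congr_ae hinner
    _ = ∫ u in (0:ℝ)..1, u ^ (d - 1) * ((p - (1 - p) * u ^ 2) / (p + (1 - p) * u ^ 2)) :=
        (intervalIntegral.integral_of_le zero_le_one).symm
end

section
/- For p ∈ [1/2,1), q = 1-p, and d ≥ 1: Var[R_{N_d}/N_d] = (d²/4){ ∫₀¹ u^{d-1} h_p(u) ℓ_p(u) du - (∫₀¹ u^{d-1} h_p(u) du)² }, where h_p(u) = (p - qu²)/(p + qu²) and ℓ_p(u) = ln((p + qu²)/u). -/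
open MeasureTheory ProbabilityTheory Real

namespace RWaux

open Set Filter Topology

noncomputable section
open scoped Classical

variable {Ω : Type*} [MeasurableSpace Ω]

/-- denominator -/
def den (p u : ℝ) : ℝ := p + (1 - p) * u ^ 2

/-- the substitution map `g(u) = u/(p+qu²)` -/
def gg (p u : ℝ) : ℝ := u / den p u

/-- its derivative -/
def gd (p u : ℝ) : ℝ := (p - (1 - p) * u ^ 2) / (den p u) ^ 2

/-- the log factor -/
def ell (p u : ℝ) : ℝ := Real.log (den p u / u)

section facts
variable {p u : ℝ}

lemma den_pos (hp : 1/2 ≤ p) (hp1 : p < 1) (u : ℝ) : 0 < den p u := by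
  have h1 : (0:ℝ) < p := by linarith
  have h2 : (0:ℝ) ≤ (1 - p) * u ^ 2 := by nlinarith [sq_nonneg u]
  unfold den; linarith

lemma den_le_one (hp : 1/2 ≤ p) (hp1 : p < 1) (hu1 : u ≤ 1) (hu0 : 0 < u) : den p u ≤ 1 := by
  have : (0:ℝ) ≤ (1-p)*(1-u^2) :=
    mul_nonneg (by linarith) (by nlinarith)
  unfold den; nlinarith

lemma u_le_den (hp : 1/2 ≤ p) (hp1 : p < 1) (hu0 : 0 < u) (hu1 : u ≤ 1) : u ≤ den p u := by
  unfold den; nlinarith [sq_nonneg (1-u)]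

lemma gg_pos (hp : 1/2 ≤ p) (hp1 : p < 1) (hu0 : 0 < u) : 0 < gg p u :=
  div_pos hu0 (den_pos hp hp1 u)

lemma gg_le_one (hp : 1/2 ≤ p) (hp1 : p < 1) (hu0 : 0 < u) (hu1 : u ≤ 1) : gg p u ≤ 1 :=
  div_le_one_of_le₀ (u_le_den hp hp1 hu0 hu1) (den_pos hp hp1 u).le

lemma gd_nonneg (hp : 1/2 ≤ p) (hp1 : p < 1) (hu0 : 0 < u) (hu1 : u ≤ 1) : 0 ≤ gd p u := by
  apply div_nonneg _ (sq_nonneg _)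
  nlinarith [sq_nonneg u]

lemma gd_le (hp : 1/2 ≤ p) (hp1 : p < 1) (hu0 : 0 < u) (hu1 : u ≤ 1) : gd p u ≤ 1/p := by
  have hd := den_pos hp hp1 u
  have h1 : (0:ℝ) < p := by linarith
  unfold gd den
  rw [div_le_div_iff₀ (by positivity) h1]
  nlinarith [sq_nonneg u, sq_nonneg (u*(1-p)), sq_nonneg (u^2*(1-p))]

lemma ell_nonneg (hp : 1/2 ≤ p) (hp1 : p < 1) (hu0 : 0 < u) (hu1 : u ≤ 1) : 0 ≤ ell p u := by
  unfold ell
  apply Real.log_nonneg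
  rw [le_div_iff₀ hu0]
  simpa using u_le_den hp hp1 hu0 hu1

lemma ell_le (hp : 1/2 ≤ p) (hp1 : p < 1) (hu0 : 0 < u) (hu1 : u ≤ 1) : ell p u ≤ -Real.log u := by
  unfold ell
  rw [← Real.log_inv]
  apply Real.log_le_log (div_pos (den_pos hp hp1 u) hu0)
  have h := den_le_one hp hp1 hu1 hu0
  rw [inv_eq_one_div]
  gcongr

lemma continuous_gg (hp : 1/2 ≤ p) (hp1 : p < 1) : Continuous (gg p) := by
  apply Continuous.div continuous_id (by unfold den; continuity)
  intro x; exact (den_pos hp hp1 x).ne'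

lemma continuous_gd (hp : 1/2 ≤ p) (hp1 : p < 1) : Continuous (gd p) := by
  apply Continuous.div (by continuity) (by unfold den; continuity)
  intro x; exact pow_ne_zero _ (den_pos hp hp1 x).ne'
lemma continuous_ell_aux (hp : 1/2 ≤ p) (hp1 : p < 1) : Measurable (ell p) := by
  apply Real.measurable_log.comp
  exact ((by unfold den; continuity : Continuous (den p)).measurable.div measurable_id)

lemma hasDerivAt_den (p u : ℝ) : HasDerivAt (den p) (2*(1-p)*u) u := by
  unfold den
  have h := ((hasDerivAt_pow 2 u).const_mul (1-p)).const_add p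
  refine h.congr_deriv ?_
  ring

lemma hasDerivAt_gg (hp : 1/2 ≤ p) (hp1 : p < 1) (u : ℝ) : HasDerivAt (gg p) (gd p u) u := by
  have hden := (den_pos hp hp1 u).ne'
  have h := (hasDerivAt_id u).div (hasDerivAt_den p u) hden
  refine h.congr_deriv ?_
  unfold gd den
  unfold den at hden
  simp only [id]
  field_simp
  ring

end facts

section meas
variable {α : Type*} [MeasurableSpace α]

lemma measurable_comp_nat {M : α → ℕ} (hM : Measurable M)
    {g : ℕ → α → ℝ} (hg : ∀ k, Measurable (g k)) : Measurable (fun a => g (M a) a) := by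
  intro s hs
  have heq : (fun a => g (M a) a) ⁻¹' s = ⋃ k, (M ⁻¹' {k}) ∩ (g k ⁻¹' s) := by
    ext a
    simp only [Set.mem_preimage, Set.mem_iUnion, Set.mem_inter_iff, Set.mem_singleton_iff]
    exact ⟨fun h => ⟨M a, rfl, h⟩, fun ⟨k, hk, h⟩ => by rw [← hk] at h; exact h⟩
  rw [heq]
  exact MeasurableSet.iUnion fun k => (hM (measurableSet_singleton k)).inter (hg k hs)

variable {X : ℕ → α → ℤ}

lemma measurable_walkSum (hX : ∀ n, Measurable (X n)) (n : ℕ) :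
    Measurable (walkSum X n) :=
  Finset.measurable_sum _ (fun i _ => hX i)

lemma measurable_hitTime (hX : ∀ n, Measurable (X n)) (d : ℤ) :
    Measurable (hitTime X d) := by
  have hS : ∀ n, Measurable (walkSum X n) := measurable_walkSum hX
  apply measurable_to_countable'
  intro k
  have heq : hitTime X d ⁻¹' {k} =
      ((walkSum X k ⁻¹' {d}) ∩ ⋂ m ∈ Finset.range k, (walkSum X m ⁻¹' {d})ᶜ) ∪
      ((⋂ n, (walkSum X n ⁻¹' {d})ᶜ) ∩ {a | k = 0}) := by
    ext ω
    simp only [Set.mem_preimage, Set.mem_singleton_iff, Set.mem_union, Set.mem_inter_iff,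
      Set.mem_iInter, Set.mem_setOf_eq, Finset.mem_range, Set.mem_compl_iff]
    constructor
    · intro hk
      by_cases hne : ∃ n, walkSum X n ω = d
      · left
        have hmem : hitTime X d ω ∈ {n | walkSum X n ω = d} := Nat.sInf_mem hne
        exact ⟨hk ▸ hmem, fun m hm => Nat.notMem_of_lt_sInf (hm.trans_eq hk.symm)⟩
      · right
        push_neg at hne
        refine ⟨hne, ?_⟩
        rw [← hk]
        unfold hitTime
        have : {n : ℕ | walkSum X n ω = d} = ∅ := by
          rw [Set.eq_empty_iff_forall_notMem]; exact fun n hn => hne n hn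
        rw [this, Nat.sInf_empty]
    · rintro (⟨h1, h2⟩ | ⟨h1, h2⟩)
      · refine le_antisymm (Nat.sInf_le h1) ?_
        by_contra hlt
        push_neg at hlt
        exact h2 _ hlt (Nat.sInf_mem (⟨k, h1⟩ : ∃ n, n ∈ {n : ℕ | walkSum X n ω = d}))
      · unfold hitTime
        have : {n : ℕ | walkSum X n ω = d} = ∅ := by
          rw [Set.eq_empty_iff_forall_notMem]; exact fun n hn => h1 n hn
        rw [this, Nat.sInf_empty, h2]
  rw [heq]
  refine MeasurableSet.union ?_ ?_
  · exact (hS k (measurableSet_singleton d)).inter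
      (MeasurableSet.biInter (Finset.range k).countable_toSet
        fun m _ => (hS m (measurableSet_singleton d)).compl)
  · refine (MeasurableSet.iInter fun n => (hS n (measurableSet_singleton d)).compl).inter ?_
    by_cases hk : k = 0
    · simp [hk]
    · simp [hk]

lemma measurable_wins (hX : ∀ n, Measurable (X n)) (k : ℕ) :
    Measurable (fun ω => wins X k ω) := by
  have heq : (fun ω => wins X k ω)
      = fun ω => ∑ i ∈ Finset.range k, (if X i ω = 1 then 1 else 0) := by
    funext ω
    unfold wins
    rw [Finset.card_filter]
  rw [heq]
  exact Finset.measurable_sum _ (fun i _ =>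
    (measurable_of_countable (fun z : ℤ => if z = 1 then (1:ℕ) else 0)).comp (hX i))

end meas

section path
variable {X : ℕ → Ω → ℤ} {ω : Ω}

lemma walkSum_zero : walkSum X 0 ω = 0 := by simp [walkSum]

lemma walkSum_succ (n : ℕ) : walkSum X (n+1) ω = walkSum X n ω + X n ω :=
  Finset.sum_range_succ _ _

lemma hit_spec {d : ℤ} (hex : ∃ n, walkSum X n ω = d) :
    walkSum X (hitTime X d ω) ω = d :=
  Nat.sInf_mem hex

lemma not_hit_before {d : ℤ} {m : ℕ} (hm : m < hitTime X d ω) : walkSum X m ω ≠ d :=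
  Nat.notMem_of_lt_sInf hm

lemma hitTime_pos {d : ℕ} (hd : 1 ≤ d) (hex : ∃ n, walkSum X n ω = (d : ℤ)) :
    1 ≤ hitTime X (d : ℤ) ω := by
  rcases Nat.eq_zero_or_pos (hitTime X (d : ℤ) ω) with h | h
  · exfalso
    have := hit_spec hex
    rw [h, walkSum_zero] at this
    have : d = 0 := by exact_mod_cast this.symm
    omega
  · exact h

lemma walkSum_le_of_le_hitTime {d : ℕ} (hpm : ∀ n, X n ω = 1 ∨ X n ω = -1) :
    ∀ m, m ≤ hitTime X (d : ℤ) ω → walkSum X m ω ≤ d := by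
  intro m
  induction m with
  | zero => intro _; rw [walkSum_zero]; exact_mod_cast Nat.zero_le d
  | succ k ih =>
    intro h
    have hlt : k < hitTime X (d : ℤ) ω := Nat.lt_of_succ_le h
    have h1 : walkSum X k ω ≤ d := ih hlt.le
    have h2 : walkSum X k ω ≠ d := not_hit_before hlt
    have h3 : walkSum X k ω ≤ (d : ℤ) - 1 := by omega
    rw [walkSum_succ]
    rcases hpm k with h4 | h4 <;> rw [h4] <;> omega

lemma two_mul_wins (hpm : ∀ n, X n ω = 1 ∨ X n ω = -1) (n : ℕ) :
    (2 * wins X n ω : ℤ) = walkSum X n ω + n := by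
  induction n with
  | zero => simp [wins, walkSum_zero]
  | succ k ih =>
    unfold wins
    rw [Finset.range_add_one, Finset.filter_insert]
    rcases hpm k with h | h
    · rw [if_pos h, Finset.card_insert_of_notMem (by simp)]
      rw [walkSum_succ, h]
      unfold wins at ih
      push_cast
      push_cast at ih
      linarith
    · rw [if_neg (by rw [h]; decide)]
      rw [walkSum_succ, h]
      unfold wins at ih
      push_cast
      push_cast at ih
      linarith

end path

section prob
variable {P : Measure Ω} [IsProbabilityMeasure P] {p : ℝ} {X : ℕ → Ω → ℤ}

lemma ae_pm1 (hp : 1/2 ≤ p) (hp1 : p < 1) (hmeas : ∀ n, Measurable (X n))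
    (hup : ∀ n, P {ω | X n ω = 1} = ENNReal.ofReal p)
    (hdown : ∀ n, P {ω | X n ω = -1} = ENNReal.ofReal (1 - p)) :
    ∀ᵐ ω ∂P, ∀ n, X n ω = 1 ∨ X n ω = -1 := by
  rw [ae_all_iff]
  intro n
  have h1 : MeasurableSet {ω | X n ω = 1} := hmeas n (measurableSet_singleton 1)
  have h2 : MeasurableSet {ω | X n ω = -1} := hmeas n (measurableSet_singleton (-1))
  have hdisj : Disjoint {ω | X n ω = 1} {ω | X n ω = -1} := by
    rw [Set.disjoint_left]
    intro ω hω1 hω2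
    simp only [Set.mem_setOf_eq] at hω1 hω2
    rw [hω1] at hω2
    exact absurd hω2 (by decide)
  have hun : P ({ω | X n ω = 1} ∪ {ω | X n ω = -1}) = 1 := by
    rw [measure_union hdisj h2, hup n, hdown n, ← ENNReal.ofReal_add (by linarith) (by linarith)]
    norm_num
  have : P (({ω | X n ω = 1} ∪ {ω | X n ω = -1})ᶜ) = 0 := by
    rw [prob_compl_eq_zero_iff (h1.union h2)]
    exact hun
  rw [MeasureTheory.ae_iff]
  have hset : {ω | ¬(X n ω = 1 ∨ X n ω = -1)} = ({ω | X n ω = 1} ∪ {ω | X n ω = -1})ᶜ := by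
    ext ω
    simp only [Set.mem_setOf_eq, Set.mem_compl_iff, Set.mem_union]
  rw [hset]
  exact this

end prob

section core
variable {P : Measure Ω} [IsProbabilityMeasure P] {p : ℝ} {X : ℕ → Ω → ℤ} {d : ℕ}

/-- the stopped exponential process -/
def Yf (X : ℕ → Ω → ℤ) (d : ℕ) (p u : ℝ) (n : ℕ) (ω : Ω) : ℝ :=
  (gg p u) ^ (min (hitTime X (d:ℤ) ω) n) *
    u ^ ((d - walkSum X (min (hitTime X (d:ℤ) ω) n) ω).toNat)

lemma measurable_Yf (hX : ∀ n, Measurable (X n)) (p u : ℝ) (n : ℕ) :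
    Measurable (Yf X d p u n) := by
  have hM : Measurable (fun ω => min (hitTime X (d:ℤ) ω) n) :=
    (measurable_of_countable (fun k => min k n)).comp (measurable_hitTime hX _)
  have hg : ∀ k, Measurable (fun ω => (gg p u) ^ k * u ^ ((d - walkSum X k ω).toNat)) := by
    intro k
    exact measurable_const.mul
      ((measurable_of_countable (fun z : ℤ => u ^ ((d - z).toNat))).comp (measurable_walkSum hX k))
  exact measurable_comp_nat hM hg

lemma Yf_nonneg (hp : 1/2 ≤ p) (hp1 : p < 1) {u : ℝ} (hu0 : 0 < u) (n : ℕ) (ω : Ω) :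
    0 ≤ Yf X d p u n ω :=
  mul_nonneg (pow_nonneg (gg_pos hp hp1 hu0).le _) (pow_nonneg hu0.le _)

lemma Yf_le_one (hp : 1/2 ≤ p) (hp1 : p < 1) {u : ℝ} (hu0 : 0 < u) (hu1 : u ≤ 1)
    (n : ℕ) (ω : Ω) : Yf X d p u n ω ≤ 1 :=
  mul_le_one₀ (pow_le_one₀ (gg_pos hp hp1 hu0).le (gg_le_one hp hp1 hu0 hu1))
    (pow_nonneg hu0.le _) (pow_le_one₀ hu0.le hu1)

lemma integrable_of_bound {f : Ω → ℝ} (hf : Measurable f) (Cb : ℝ)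
    (h : ∀ ω, |f ω| ≤ Cb) : Integrable f P :=
  ⟨hf.aestronglyMeasurable, HasFiniteIntegral.of_bounded (C := Cb) (ae_of_all _ h)⟩

lemma step_integral
    (hp : 1/2 ≤ p) (hp1 : p < 1)
    (hmeas : ∀ n, Measurable (X n))
    (hindep : iIndepFun X P)
    (hup : ∀ n, P {ω | X n ω = 1} = ENNReal.ofReal p)
    (hdown : ∀ n, P {ω | X n ω = -1} = ENNReal.ofReal (1 - p))
    (hd : 1 ≤ d)
    (hfin : ∀ᵐ ω ∂P, ∃ n, walkSum X n ω = (d : ℤ))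
    {u : ℝ} (hu0 : 0 < u) (hu1 : u ≤ 1) (n : ℕ) :
    ∫ ω, Yf X d p u (n+1) ω ∂P = ∫ ω, Yf X d p u n ω ∂P := by
  have hden := den_pos hp hp1 u
  have hs0 := gg_pos hp hp1 hu0
  have hs1 := gg_le_one hp hp1 hu0 hu1
  set C : Ω → ℝ := fun ω => if hitTime X (d:ℤ) ω ≤ n then Yf X d p u n ω else 0 with hC_def
  set A : Ω → ℝ := fun ω =>
    if (∀ m ≤ n, walkSum X m ω ≠ (d:ℤ)) then gg p u ^ n * u ^ ((d - walkSum X n ω).toNat) else 0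
    with hA_def
  set B : Ω → ℝ := fun ω =>
    if X n ω = 1 then gg p u / u else if X n ω = -1 then gg p u * u else 0 with hB_def
  -- measurability
  have hCmeas : Measurable C := by
    apply Measurable.ite _ (measurable_Yf hmeas p u n) measurable_const
    exact (measurable_hitTime hmeas _) (show MeasurableSet {k : ℕ | k ≤ n} from (Set.to_countable _).measurableSet)
  have hAmeas : Measurable A := by
    apply Measurable.ite _ _ measurable_const
    · have : {ω | ∀ m ≤ n, walkSum X m ω ≠ (d:ℤ)}
          = ⋂ m, ⋂ (_ : m ≤ n), (walkSum X m ⁻¹' {(d:ℤ)})ᶜ := by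
        ext ω; simp [Set.mem_iInter]
      rw [this]
      exact MeasurableSet.iInter fun m => MeasurableSet.iInter fun _ =>
        ((measurable_walkSum hmeas m) (measurableSet_singleton _)).compl
    · exact measurable_const.mul
        ((measurable_of_countable (fun z : ℤ => u ^ ((d - z).toNat))).comp
          (measurable_walkSum hmeas n))
  have hBmeas : Measurable B := by
    apply Measurable.ite (hmeas n (measurableSet_singleton 1)) measurable_const
    exact Measurable.ite (hmeas n (measurableSet_singleton (-1))) measurable_const
      measurable_const
  -- bounds and integrability
  have hCint : Integrable C P := by
    apply integrable_of_bound hCmeas 1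
    intro ω
    simp only [hC_def]
    by_cases h : hitTime X (d:ℤ) ω ≤ n
    · rw [if_pos h, abs_of_nonneg (Yf_nonneg hp hp1 hu0 n ω)]
      exact Yf_le_one hp hp1 hu0 hu1 n ω
    · rw [if_neg h]; norm_num
  have hAint : Integrable A P := by
    apply integrable_of_bound hAmeas 1
    intro ω
    simp only [hA_def]
    by_cases h : ∀ m ≤ n, walkSum X m ω ≠ (d:ℤ)
    · rw [if_pos h, abs_of_nonneg (mul_nonneg (pow_nonneg hs0.le _) (pow_nonneg hu0.le _))]
      exact mul_le_one₀ (pow_le_one₀ hs0.le hs1) (pow_nonneg hu0.le _)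
        (pow_le_one₀ hu0.le hu1)
    · rw [if_neg h]; norm_num
  have hBint : Integrable B P := by
    apply integrable_of_bound hBmeas (1/u)
    intro ω
    simp only [hB_def]
    have h1 : gg p u / u ≤ 1 / u := by gcongr
    have h2 : gg p u * u ≤ 1 / u := by
      have hsu : gg p u * u ≤ 1 := mul_le_one₀ hs1 hu0.le hu1
      have hq : gg p u * u * u ≤ 1 * 1 :=
        mul_le_mul hsu hu1 hu0.le (by linarith)
      rw [le_div_iff₀ hu0]
      linarith
    by_cases hx : X n ω = 1
    · rw [if_pos hx, abs_of_nonneg (by positivity)]; exact h1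
    · rw [if_neg hx]
      by_cases hy : X n ω = -1
      · rw [if_pos hy, abs_of_nonneg (by positivity)]; exact h2
      · rw [if_neg hy, abs_zero]; positivity
  -- independence of A and B
  have hAB : IndepFun A B P := by
    have hind := hindep.indepFun_finset (Finset.range n) {n}
      (by simp) hmeas
    set φ : (↥(Finset.range n) → ℤ) → ℝ := fun v =>
      if (∀ m ≤ n, (∑ k ∈ Finset.range m,
            if h : k < n then v ⟨k, Finset.mem_range.mpr h⟩ else 0) ≠ (d:ℤ))
      then gg p u ^ n * u ^ ((d - (∑ k ∈ Finset.range n,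
            if h : k < n then v ⟨k, Finset.mem_range.mpr h⟩ else 0)).toNat) else 0 with hφ_def
    set ψ : (↥({n} : Finset ℕ) → ℤ) → ℝ := fun v =>
      if v ⟨n, Finset.mem_singleton_self n⟩ = 1 then gg p u / u
      else if v ⟨n, Finset.mem_singleton_self n⟩ = -1 then gg p u * u else 0 with hψ_def
    have h2 := hind.comp (φ := φ) (ψ := ψ) (measurable_of_countable φ)
      (measurable_of_countable ψ)
    have hA : A = φ ∘ (fun a (i : ↥(Finset.range n)) => X i a) := by
      funext ω
      have hS : ∀ m, m ≤ n → (∑ k ∈ Finset.range m,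
          if h : k < n then X k ω else 0) = walkSum X m ω := by
        intro m hm
        unfold walkSum
        apply Finset.sum_congr rfl
        intro k hk
        rw [dif_pos (lt_of_lt_of_le (Finset.mem_range.mp hk) hm)]
      simp only [hA_def]
      simp only [Function.comp_apply, hφ_def]
      apply if_congr
      · constructor
        · intro h m hm; rw [hS m hm]; exact h m hm
        · intro h m hm; rw [← hS m hm]; exact h m hm
      · rw [hS n le_rfl]
      · rfl
    have hB : B = ψ ∘ (fun a (i : ↥({n} : Finset ℕ)) => X i a) := by
      funext ω
      simp only [hB_def]
      simp only [Function.comp_apply, hψ_def]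
    rw [hA, hB]
    exact h2
  -- expectation of B is 1
  have hBexp : ∫ ω, B ω ∂P = 1 := by
    have hmeas1 : MeasurableSet {ω | X n ω = 1} := hmeas n (measurableSet_singleton 1)
    have hmeas2 : MeasurableSet {ω | X n ω = -1} := hmeas n (measurableSet_singleton (-1))
    have hBeq : B = fun ω =>
        Set.indicator {ω | X n ω = 1} (fun _ => gg p u / u) ω
        + Set.indicator {ω | X n ω = -1} (fun _ => gg p u * u) ω := by
      funext ω
      simp only [hB_def]
      by_cases h1 : X n ω = 1
      · have h2 : X n ω ≠ -1 := by rw [h1]; decide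
        simp [Set.indicator_apply, h1, h2]
      · by_cases h2 : X n ω = -1 <;> simp [Set.indicator_apply, h1, h2]
    rw [hBeq, integral_add ((integrable_const _).indicator hmeas1)
      ((integrable_const _).indicator hmeas2),
      integral_indicator_const _ hmeas1, integral_indicator_const _ hmeas2,
      measureReal_def, measureReal_def, hup n, hdown n, ENNReal.toReal_ofReal (by linarith), ENNReal.toReal_ofReal (by linarith)]
    simp only [smul_eq_mul]
    have hne_u : u ≠ 0 := hu0.ne'
    have hne_d : den p u ≠ 0 := hden.ne'
    have h1 : gg p u / u = 1 / den p u := by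
      unfold gg; field_simp
    have h2 : gg p u * u = u^2 / den p u := by
      unfold gg; field_simp
    rw [h1, h2, mul_one_div, ← mul_div_assoc, ← add_div,
      div_eq_one_iff_eq hne_d]
    unfold den; ring
  -- a.e. identities
  have hae1 : (fun ω => Yf X d p u (n+1) ω) =ᵐ[P] (fun ω => C ω + A ω * B ω) := by
    filter_upwards [hfin, ae_pm1 hp hp1 hmeas hup hdown] with ω hex hpm
    have hiff : (∀ m ≤ n, walkSum X m ω ≠ (d:ℤ)) ↔ n < hitTime X (d:ℤ) ω := by
      constructor
      · intro h
        by_contra hle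
        push_neg at hle
        exact h _ hle (hit_spec hex)
      · intro h m hm
        exact not_hit_before (lt_of_le_of_lt hm h)
    by_cases hc : hitTime X (d:ℤ) ω ≤ n
    · have hm1 : min (hitTime X (d:ℤ) ω) (n+1) = hitTime X (d:ℤ) ω := min_eq_left (by omega)
      have hm2 : min (hitTime X (d:ℤ) ω) n = hitTime X (d:ℤ) ω := min_eq_left hc
      have hA0 : A ω = 0 := by
        simp only [hA_def]
        rw [if_neg]
        intro hall
        exact absurd hc (not_le.mpr (hiff.mp hall))
      simp only [hC_def]
      rw [if_pos hc, hA0, zero_mul, add_zero]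
      unfold Yf
      rw [hm1, hm2]
    · push_neg at hc
      have hm1 : min (hitTime X (d:ℤ) ω) (n+1) = n+1 := min_eq_right (by omega)
      have hm2 : min (hitTime X (d:ℤ) ω) n = n := min_eq_right (by omega)
      have hC0 : C ω = 0 := by simp only [hC_def]; rw [if_neg (not_le.mpr hc)]
      have hAv : A ω = gg p u ^ n * u ^ ((d - walkSum X n ω).toNat) := by
        simp only [hA_def]; rw [if_pos (hiff.mpr hc)]
      have hSle : walkSum X n ω ≤ (d:ℤ) - 1 := by
        have h1 := walkSum_le_of_le_hitTime hpm n hc.le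
        have h2 := not_hit_before hc
        omega
      rw [hC0, hAv, zero_add]
      unfold Yf
      rw [hm1, walkSum_succ]
      rcases hpm n with hx | hx
      · simp only [hB_def]
        rw [if_pos hx, hx]
        have htn : ((d:ℤ) - (walkSum X n ω + 1)).toNat + 1 = ((d:ℤ) - walkSum X n ω).toNat := by
          omega
        rw [← htn, pow_succ (gg p u) n, pow_succ u]
        field_simp
      · simp only [hB_def]
        rw [if_neg (by rw [hx]; decide), if_pos hx, hx]
        have htn : ((d:ℤ) - (walkSum X n ω + (-1))).toNat = ((d:ℤ) - walkSum X n ω).toNat + 1 := by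
          omega
        rw [htn, pow_succ (gg p u) n, pow_succ u]
        ring
  have hae2 : (fun ω => Yf X d p u n ω) =ᵐ[P] (fun ω => C ω + A ω) := by
    filter_upwards [hfin, ae_pm1 hp hp1 hmeas hup hdown] with ω hex hpm
    have hiff : (∀ m ≤ n, walkSum X m ω ≠ (d:ℤ)) ↔ n < hitTime X (d:ℤ) ω := by
      constructor
      · intro h
        by_contra hle
        push_neg at hle
        exact h _ hle (hit_spec hex)
      · intro h m hm
        exact not_hit_before (lt_of_le_of_lt hm h)
    by_cases hc : hitTime X (d:ℤ) ω ≤ n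
    · have hA0 : A ω = 0 := by
        simp only [hA_def]
        rw [if_neg]
        intro hall
        exact absurd hc (not_le.mpr (hiff.mp hall))
      simp only [hC_def]
      rw [if_pos hc, hA0, add_zero]
    · push_neg at hc
      have hm2 : min (hitTime X (d:ℤ) ω) n = n := min_eq_right (by omega)
      have hC0 : C ω = 0 := by simp only [hC_def]; rw [if_neg (not_le.mpr hc)]
      have hAv : A ω = gg p u ^ n * u ^ ((d - walkSum X n ω).toNat) := by
        simp only [hA_def]; rw [if_pos (hiff.mpr hc)]
      rw [hC0, hAv, zero_add]
      unfold Yf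
      rw [hm2]
  -- put it together
  have hABint : Integrable (fun ω => A ω * B ω) P := by
    apply integrable_of_bound (hAmeas.mul hBmeas) (1 * (1/u))
    intro ω
    rw [Pi.mul_apply, abs_mul]
    apply mul_le_mul _ _ (abs_nonneg _) (by norm_num)
    · simp only [hA_def]
      by_cases h : ∀ m ≤ n, walkSum X m ω ≠ (d:ℤ)
      · rw [if_pos h, abs_of_nonneg (mul_nonneg (pow_nonneg hs0.le _) (pow_nonneg hu0.le _))]
        exact mul_le_one₀ (pow_le_one₀ hs0.le hs1) (pow_nonneg hu0.le _)
          (pow_le_one₀ hu0.le hu1)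
      · rw [if_neg h]; norm_num
    · simp only [hB_def]
      have h1 : gg p u / u ≤ 1 / u := by gcongr
      have h2 : gg p u * u ≤ 1 / u := by
        have hsu : gg p u * u ≤ 1 := mul_le_one₀ hs1 hu0.le hu1
        have hq : gg p u * u * u ≤ 1 * 1 :=
          mul_le_mul hsu hu1 hu0.le (by linarith)
        rw [le_div_iff₀ hu0]
        linarith
      by_cases hx : X n ω = 1
      · rw [if_pos hx, abs_of_nonneg (by positivity)]; exact h1
      · rw [if_neg hx]
        by_cases hy : X n ω = -1
        · rw [if_pos hy, abs_of_nonneg (by positivity)]; exact h2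
        · rw [if_neg hy, abs_zero]; positivity
  calc ∫ ω, Yf X d p u (n+1) ω ∂P
      = ∫ ω, (C ω + A ω * B ω) ∂P := integral_congr_ae hae1
    _ = ∫ ω, C ω ∂P + ∫ ω, A ω * B ω ∂P := integral_add hCint hABint
    _ = ∫ ω, C ω ∂P + (∫ ω, A ω ∂P) * (∫ ω, B ω ∂P) := by
        rw [show (fun ω => A ω * B ω) = A * B from rfl]
        rw [hAB.integral_mul_eq_mul_integral hAint.aestronglyMeasurable hBint.aestronglyMeasurable]
    _ = ∫ ω, C ω ∂P + ∫ ω, A ω ∂P := by rw [hBexp, mul_one]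
    _ = ∫ ω, (C ω + A ω) ∂P := (integral_add hCint hAint).symm
    _ = ∫ ω, Yf X d p u n ω ∂P := (integral_congr_ae hae2).symm

lemma integral_pow_hitTime
    (hp : 1/2 ≤ p) (hp1 : p < 1)
    (hmeas : ∀ n, Measurable (X n))
    (hindep : iIndepFun X P)
    (hup : ∀ n, P {ω | X n ω = 1} = ENNReal.ofReal p)
    (hdown : ∀ n, P {ω | X n ω = -1} = ENNReal.ofReal (1 - p))
    (hd : 1 ≤ d)
    (hfin : ∀ᵐ ω ∂P, ∃ n, walkSum X n ω = (d : ℤ))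
    {u : ℝ} (hu0 : 0 < u) (hu1 : u ≤ 1) :
    ∫ ω, (gg p u) ^ (hitTime X (d:ℤ) ω) ∂P = u ^ d := by
  have hconst : ∀ n, ∫ ω, Yf X d p u n ω ∂P = u ^ d := by
    intro n
    induction n with
    | zero =>
      have h0 : Yf X d p u 0 = fun _ => u ^ d := by
        funext ω
        unfold Yf
        rw [min_eq_right (Nat.zero_le _), walkSum_zero, sub_zero, Int.toNat_natCast,
          pow_zero, one_mul]
      rw [h0, integral_const]
      simp
    | succ k ih =>
      rw [step_integral hp hp1 hmeas hindep hup hdown hd hfin hu0 hu1 k, ih]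
  have hlim : Tendsto (fun n => ∫ ω, Yf X d p u n ω ∂P) atTop
      (𝓝 (∫ ω, (gg p u) ^ (hitTime X (d:ℤ) ω) ∂P)) := by
    apply tendsto_integral_of_dominated_convergence (bound := fun _ => 1)
    · exact fun n => (measurable_Yf hmeas p u n).aestronglyMeasurable
    · exact integrable_const 1
    · intro n
      apply ae_of_all
      intro ω
      rw [Real.norm_eq_abs, abs_of_nonneg (Yf_nonneg hp hp1 hu0 n ω)]
      exact Yf_le_one hp hp1 hu0 hu1 n ω
    · filter_upwards [hfin] with ω hex
      apply tendsto_atTop_of_eventually_const (i₀ := hitTime X (d:ℤ) ω)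
      intro n hn
      unfold Yf
      rw [min_eq_left hn, hit_spec hex, sub_self, Int.toNat_zero, pow_zero, mul_one]
  have : Tendsto (fun n => ∫ ω, Yf X d p u n ω ∂P) atTop (𝓝 (u ^ d)) := by
    simp only [hconst]
    exact tendsto_const_nhds
  exact tendsto_nhds_unique hlim this

lemma integral_pow_hitTime_sub_one
    (hp : 1/2 ≤ p) (hp1 : p < 1)
    (hmeas : ∀ n, Measurable (X n))
    (hindep : iIndepFun X P)
    (hup : ∀ n, P {ω | X n ω = 1} = ENNReal.ofReal p)
    (hdown : ∀ n, P {ω | X n ω = -1} = ENNReal.ofReal (1 - p))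
    (hd : 1 ≤ d)
    (hfin : ∀ᵐ ω ∂P, ∃ n, walkSum X n ω = (d : ℤ))
    {u : ℝ} (hu0 : 0 < u) (hu1 : u ≤ 1) :
    ∫ ω, (gg p u) ^ (hitTime X (d:ℤ) ω - 1) ∂P = u ^ d * (den p u / u) := by
  have hden := den_pos hp hp1 u
  have hs0 := (gg_pos hp hp1 hu0).ne'
  have hae : (fun ω => (gg p u) ^ (hitTime X (d:ℤ) ω - 1))
      =ᵐ[P] (fun ω => (gg p u) ^ (hitTime X (d:ℤ) ω) * (den p u / u)) := by
    filter_upwards [hfin] with ω hex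
    have hN1 : 1 ≤ hitTime X (d:ℤ) ω := hitTime_pos hd hex
    have hpow : (gg p u) ^ (hitTime X (d:ℤ) ω)
        = (gg p u) ^ (hitTime X (d:ℤ) ω - 1) * gg p u := by
      rw [← pow_succ, Nat.sub_add_cancel hN1]
    have hgg1 : gg p u * (den p u / u) = 1 := by
      unfold gg; field_simp
    rw [hpow, mul_assoc, hgg1, mul_one]
  rw [integral_congr_ae hae, integral_mul_const,
    integral_pow_hitTime hp hp1 hmeas hindep hup hdown hd hfin hu0 hu1]

end core

section calculus
variable {p : ℝ}

lemma continuous_den : Continuous (den p) := by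
  unfold den; continuity

lemma gg_one (hp : 1/2 ≤ p) (hp1 : p < 1) : gg p 1 = 1 := by
  unfold gg den; norm_num

lemma gg_zero : gg p 0 = 0 := by
  unfold gg; simp

lemma integrableOn_log01 : IntegrableOn Real.log (Set.Ioc (0:ℝ) 1) volume := by
  have hrpow : IntegrableOn (fun x : ℝ => x ^ (-(1:ℝ)/2)) (Set.Ioc (0:ℝ) 1) volume := by
    have h := intervalIntegral.intervalIntegrable_rpow' (a := 0) (b := 1)
      (r := -(1:ℝ)/2) (by norm_num)
    rwa [intervalIntegrable_iff_integrableOn_Ioc_of_le zero_le_one] at h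
  refine Integrable.mono' (hrpow.const_mul 2) Real.measurable_log.aestronglyMeasurable ?_
  rw [ae_restrict_iff' measurableSet_Ioc]
  apply ae_of_all
  rintro x ⟨hx0, hx1⟩
  rw [Real.norm_eq_abs, abs_of_nonpos (Real.log_nonpos hx0.le hx1)]
  have h1 : -Real.log x = 2 * Real.log (x ^ (-(1:ℝ)/2)) := by
    rw [Real.log_rpow hx0]; ring
  have h2 : Real.log (x ^ (-(1:ℝ)/2)) ≤ x ^ (-(1:ℝ)/2) - 1 :=
    Real.log_le_sub_one_of_pos (Real.rpow_pos_of_pos hx0 _)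
  rw [h1]
  linarith

lemma calc_I1 (hp : 1/2 ≤ p) (hp1 : p < 1) {n : ℕ} (hn : 1 ≤ n) :
    ∫ u in Set.Ioc (0:ℝ) 1, gg p u ^ (n-1) * gd p u = 1 / n := by
  have hn0 : (n:ℝ) ≠ 0 := Nat.cast_ne_zero.mpr (by omega)
  have hder : ∀ x ∈ Set.uIcc (0:ℝ) 1,
      HasDerivAt (fun y => gg p y ^ n / n) (gg p x ^ (n-1) * gd p x) x := by
    intro x _
    have h := ((hasDerivAt_gg hp hp1 x).pow n).div_const (n:ℝ)
    refine h.congr_deriv ?_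
    field_simp
  have hcont : Continuous (fun u => gg p u ^ (n-1) * gd p u) :=
    ((continuous_gg hp hp1).pow _).mul (continuous_gd hp hp1)
  have h := intervalIntegral.integral_eq_sub_of_hasDerivAt hder (hcont.intervalIntegrable 0 1)
  rw [← intervalIntegral.integral_of_le zero_le_one, h, gg_one hp hp1, gg_zero,
    one_pow, zero_pow (by omega), zero_div, sub_zero]

lemma ell_eq_neg_log_gg (hp : 1/2 ≤ p) (hp1 : p < 1) {u : ℝ} (hu0 : 0 < u) :
    ell p u = -Real.log (gg p u) := by
  unfold ell gg
  rw [← Real.log_inv]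
  congr 1
  rw [inv_div]

lemma integrableOn_I2 (hp : 1/2 ≤ p) (hp1 : p < 1) {n : ℕ} (hn : 1 ≤ n) :
    IntegrableOn (fun u => gg p u ^ (n-1) * gd p u * ell p u) (Set.Ioc (0:ℝ) 1) volume := by
  have hk : Continuous (fun u => gg p u ^ (n-1) * gd p u) :=
    ((continuous_gg hp hp1).pow _).mul (continuous_gd hp hp1)
  have heq : Set.EqOn
      (fun u => gg p u ^ (n-1) * gd p u * Real.log (den p u) - (gg p u ^ (n-1) * gd p u) * Real.log u)
      (fun u => gg p u ^ (n-1) * gd p u * ell p u) (Set.Ioc (0:ℝ) 1) := by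
    rintro x ⟨hx0, hx1⟩
    simp only
    unfold ell
    rw [Real.log_div (den_pos hp hp1 x).ne' hx0.ne']
    ring
  refine IntegrableOn.congr_fun ?_ heq measurableSet_Ioc
  apply Integrable.sub
  · have hc : Continuous (fun u => gg p u ^ (n-1) * gd p u * Real.log (den p u)) := by
      apply hk.mul
      exact continuous_den.log (fun x => (den_pos hp hp1 x).ne')
    exact (hc.integrableOn_Icc (a := 0) (b := 1)).mono_set Set.Ioc_subset_Icc_self
  · have hp0 : (0:ℝ) < p := by linarith
    refine Integrable.mono' ((integrableOn_log01.norm).const_mul (1/p))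
      ((hk.measurable.mul Real.measurable_log).aestronglyMeasurable) ?_
    rw [ae_restrict_iff' measurableSet_Ioc]
    apply ae_of_all
    rintro x ⟨hx0, hx1⟩
    rw [norm_mul]
    have hb1 : ‖gg p x ^ (n-1) * gd p x‖ ≤ 1/p := by
      rw [Real.norm_eq_abs, abs_of_nonneg (mul_nonneg (pow_nonneg (gg_pos hp hp1 hx0).le _)
        (gd_nonneg hp hp1 hx0 hx1))]
      calc gg p x ^ (n-1) * gd p x ≤ 1 * gd p x := by
            apply mul_le_mul_of_nonneg_right _ (gd_nonneg hp hp1 hx0 hx1)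
            exact pow_le_one₀ (gg_pos hp hp1 hx0).le (gg_le_one hp hp1 hx0 hx1)
        _ = gd p x := one_mul _
        _ ≤ 1/p := gd_le hp hp1 hx0 hx1
    calc ‖gg p x ^ (n-1) * gd p x‖ * ‖Real.log x‖ ≤ (1/p) * ‖Real.log x‖ :=
          mul_le_mul_of_nonneg_right hb1 (norm_nonneg _)
      _ = 1/p * ‖Real.log x‖ := rfl

lemma calc_I2 (hp : 1/2 ≤ p) (hp1 : p < 1) {n : ℕ} (hn : 1 ≤ n) :
    ∫ u in Set.Ioc (0:ℝ) 1, gg p u ^ (n-1) * gd p u * ell p u = 1 / (n:ℝ)^2 := by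
  have hn0 : (n:ℝ) ≠ 0 := Nat.cast_ne_zero.mpr (by omega)
  set H : ℝ → ℝ := fun x => -(gg p x ^ n * Real.log (gg p x)) / n + gg p x ^ n / n^2
    with hH_def
  have hpow_eq : ∀ x : ℝ, gg p x ^ n = gg p x ^ (n-1) * gg p x := by
    intro x
    rw [← pow_succ, Nat.sub_add_cancel hn]
  have hcont : ContinuousOn H (Set.Icc (0:ℝ) 1) := by
    have hc : Continuous (fun x => -(gg p x ^ (n-1) * (gg p x * Real.log (gg p x))) / n
        + gg p x ^ n / n^2) := by
      apply Continuous.add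
      · apply Continuous.div_const
        apply Continuous.neg
        exact ((continuous_gg hp hp1).pow _).mul
          (Real.continuous_mul_log.comp (continuous_gg hp hp1))
      · exact Continuous.div_const ((continuous_gg hp hp1).pow _) _
    apply Continuous.continuousOn
    convert hc using 1
    funext x
    rw [hH_def]
    simp only
    rw [hpow_eq x]
    ring
  have hderiv : ∀ x ∈ Set.Ioo (0:ℝ) 1, HasDerivWithinAt H
      (gg p x ^ (n-1) * gd p x * ell p x) (Set.Ioi x) x := by
    rintro x ⟨hx0, hx1⟩
    have hggx : 0 < gg p x := gg_pos hp hp1 hx0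
    have hpown : HasDerivAt (fun y => gg p y ^ n)
        ((n:ℝ) * gg p x ^ (n-1) * gd p x) x := (hasDerivAt_gg hp hp1 x).pow n
    have hlog : HasDerivAt (fun y => Real.log (gg p y)) (gd p x / gg p x) x :=
      (hasDerivAt_gg hp hp1 x).log hggx.ne'
    have hd : HasDerivAt H
        (-((n:ℝ) * gg p x ^ (n-1) * gd p x * Real.log (gg p x)
            + gg p x ^ n * (gd p x / gg p x)) / n
         + ((n:ℝ) * gg p x ^ (n-1) * gd p x) / n^2) x := by
      rw [hH_def]
      exact ((hpown.mul hlog).neg.div_const _).add (hpown.div_const _)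
    have hval : -((n:ℝ) * gg p x ^ (n-1) * gd p x * Real.log (gg p x)
            + gg p x ^ n * (gd p x / gg p x)) / n
         + ((n:ℝ) * gg p x ^ (n-1) * gd p x) / n^2
        = gg p x ^ (n-1) * gd p x * ell p x := by
      rw [ell_eq_neg_log_gg hp hp1 hx0, hpow_eq x]
      field_simp
      ring
    rw [hval] at hd
    exact hd.hasDerivWithinAt
  have hint : IntervalIntegrable (fun u => gg p u ^ (n-1) * gd p u * ell p u) volume 0 1 := by
    rw [intervalIntegrable_iff_integrableOn_Ioc_of_le zero_le_one]
    exact integrableOn_I2 hp hp1 hn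
  have h := intervalIntegral.integral_eq_sub_of_hasDeriv_right_of_le zero_le_one hcont hderiv hint
  rw [← intervalIntegral.integral_of_le zero_le_one, h, hH_def]
  simp only
  rw [gg_one hp hp1, gg_zero, one_pow, zero_pow (by omega : n ≠ 0), Real.log_one]
  norm_num

end calculus

section fubini
variable {P : Measure Ω} [IsProbabilityMeasure P] {p : ℝ} {X : ℕ → Ω → ℤ} {d : ℕ}

lemma swap_key
    (hp : 1/2 ≤ p) (hp1 : p < 1)
    (hmeas : ∀ n, Measurable (X n))
    (hindep : iIndepFun X P)
    (hup : ∀ n, P {ω | X n ω = 1} = ENNReal.ofReal p)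
    (hdown : ∀ n, P {ω | X n ω = -1} = ENNReal.ofReal (1 - p))
    (hd : 1 ≤ d)
    (hfin : ∀ᵐ ω ∂P, ∃ n, walkSum X n ω = (d : ℤ))
    (w : ℝ → ℝ) (hw : Measurable w)
    (bnd : ℝ → ℝ) (hbnd : IntegrableOn bnd (Set.Ioc (0:ℝ) 1) volume)
    (hb : ∀ u ∈ Set.Ioc (0:ℝ) 1, |w u| ≤ bnd u) :
    ∫ ω, (∫ u in Set.Ioc (0:ℝ) 1, gg p u ^ (hitTime X (d:ℤ) ω - 1) * w u) ∂P
      = ∫ u in Set.Ioc (0:ℝ) 1, (u ^ d * (den p u / u)) * w u := by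
  set μ : Measure ℝ := volume.restrict (Set.Ioc (0:ℝ) 1) with hμ_def
  -- joint measurability
  have hFmeas : Measurable (fun z : ℝ × Ω =>
      gg p z.1 ^ (hitTime X (d:ℤ) z.2 - 1) * w z.1) := by
    have hM : Measurable (fun z : ℝ × Ω => hitTime X (d:ℤ) z.2) :=
      (measurable_hitTime hmeas _).comp measurable_snd
    have h1 : Measurable (fun z : ℝ × Ω => gg p z.1 ^ (hitTime X (d:ℤ) z.2 - 1)) := by
      have hg : ∀ k : ℕ, Measurable (fun z : ℝ × Ω => gg p z.1 ^ (k - 1)) := by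
        intro k
        exact (((continuous_gg hp hp1).measurable).pow_const _).comp measurable_fst
      exact measurable_comp_nat hM hg
    exact h1.mul (hw.comp measurable_fst)
  -- full-measure of first coordinate in Ioc
  have hae1 : ∀ᵐ z : ℝ × Ω ∂(μ.prod P), z.1 ∈ Set.Ioc (0:ℝ) 1 := by
    rw [ae_iff]
    have hset : {z : ℝ × Ω | ¬ z.1 ∈ Set.Ioc (0:ℝ) 1}
        = ((Set.Ioc (0:ℝ) 1)ᶜ) ×ˢ Set.univ := by
      ext z; simp [Set.mem_prod]
    rw [hset, Measure.prod_prod, hμ_def,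
      Measure.restrict_apply measurableSet_Ioc.compl]
    simp
  -- integrability on product
  have hbnd' : Integrable (fun z : ℝ × Ω => bnd z.1) (μ.prod P) := by
    have hmap : Measure.map Prod.fst (μ.prod P) = μ := by
      rw [Measure.map_fst_prod]; simp
    have h1 : AEStronglyMeasurable bnd (Measure.map Prod.fst (μ.prod P)) := by
      rw [hmap]; exact hbnd.aestronglyMeasurable
    exact (integrable_map_measure h1 measurable_fst.aemeasurable).mp (by rw [hmap]; exact hbnd)
  have hFint : Integrable (Function.uncurry fun u ω =>
      gg p u ^ (hitTime X (d:ℤ) ω - 1) * w u) (μ.prod P) := by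
    refine Integrable.mono' hbnd' hFmeas.aestronglyMeasurable ?_
    filter_upwards [hae1] with z hz
    obtain ⟨hz0, hz1⟩ := hz
    show ‖gg p z.1 ^ (hitTime X (d:ℤ) z.2 - 1) * w z.1‖ ≤ bnd z.1
    rw [norm_mul]
    have h1 : ‖gg p z.1 ^ (hitTime X (d:ℤ) z.2 - 1)‖ ≤ 1 := by
      rw [Real.norm_eq_abs, abs_of_nonneg (pow_nonneg (gg_pos hp hp1 hz0).le _)]
      exact pow_le_one₀ (gg_pos hp hp1 hz0).le (gg_le_one hp hp1 hz0 hz1)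
    have h2 : ‖w z.1‖ ≤ bnd z.1 := by
      rw [Real.norm_eq_abs]; exact hb z.1 ⟨hz0, hz1⟩
    calc ‖gg p z.1 ^ (hitTime X (d:ℤ) z.2 - 1)‖ * ‖w z.1‖ ≤ 1 * bnd z.1 :=
          mul_le_mul h1 h2 (norm_nonneg _) one_pos.le
      _ = bnd z.1 := one_mul _
  -- swap
  have hswap := integral_integral_swap
    (f := fun u ω => gg p u ^ (hitTime X (d:ℤ) ω - 1) * w u) hFint
  rw [← hswap, hμ_def]
  apply setIntegral_congr_fun measurableSet_Ioc
  rintro u ⟨hu0, hu1⟩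
  simp only
  rw [integral_mul_const,
    integral_pow_hitTime_sub_one hp hp1 hmeas hindep hup hdown hd hfin hu0 hu1]

lemma measurable_ell : Measurable (ell p) :=
  Real.measurable_log.comp (continuous_den.measurable.div measurable_id)

lemma E_inv
    (hp : 1/2 ≤ p) (hp1 : p < 1)
    (hmeas : ∀ n, Measurable (X n))
    (hindep : iIndepFun X P)
    (hup : ∀ n, P {ω | X n ω = 1} = ENNReal.ofReal p)
    (hdown : ∀ n, P {ω | X n ω = -1} = ENNReal.ofReal (1 - p))
    (hd : 1 ≤ d)
    (hfin : ∀ᵐ ω ∂P, ∃ n, walkSum X n ω = (d : ℤ)) :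
    ∫ ω, ((hitTime X (d:ℤ) ω : ℝ))⁻¹ ∂P
      = ∫ u in Set.Ioc (0:ℝ) 1, (u ^ d * (den p u / u)) * gd p u := by
  have hcongr : (fun ω => ((hitTime X (d:ℤ) ω : ℝ))⁻¹)
      =ᵐ[P] (fun ω => ∫ u in Set.Ioc (0:ℝ) 1,
          gg p u ^ (hitTime X (d:ℤ) ω - 1) * gd p u) := by
    filter_upwards [hfin] with ω hex
    rw [calc_I1 hp hp1 (hitTime_pos hd hex), one_div]
  rw [integral_congr_ae hcongr]
  exact swap_key hp hp1 hmeas hindep hup hdown hd hfin (gd p)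
    (continuous_gd hp hp1).measurable (fun _ => 1/p)
    ((integrableOn_const_iff).mpr (Or.inr measure_Ioc_lt_top))
    (fun u hu => by
      rw [abs_of_nonneg (gd_nonneg hp hp1 hu.1 hu.2)]
      exact gd_le hp hp1 hu.1 hu.2)

lemma E_inv_sq
    (hp : 1/2 ≤ p) (hp1 : p < 1)
    (hmeas : ∀ n, Measurable (X n))
    (hindep : iIndepFun X P)
    (hup : ∀ n, P {ω | X n ω = 1} = ENNReal.ofReal p)
    (hdown : ∀ n, P {ω | X n ω = -1} = ENNReal.ofReal (1 - p))
    (hd : 1 ≤ d)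
    (hfin : ∀ᵐ ω ∂P, ∃ n, walkSum X n ω = (d : ℤ)) :
    ∫ ω, (((hitTime X (d:ℤ) ω : ℝ))⁻¹)^2 ∂P
      = ∫ u in Set.Ioc (0:ℝ) 1, (u ^ d * (den p u / u)) * (gd p u * ell p u) := by
  have hp0 : (0:ℝ) < p := by linarith
  have hcongr : (fun ω => (((hitTime X (d:ℤ) ω : ℝ))⁻¹)^2)
      =ᵐ[P] (fun ω => ∫ u in Set.Ioc (0:ℝ) 1,
          gg p u ^ (hitTime X (d:ℤ) ω - 1) * (gd p u * ell p u)) := by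
    filter_upwards [hfin] with ω hex
    have h := calc_I2 hp hp1 (hitTime_pos hd hex)
    have hre : (fun u => gg p u ^ (hitTime X (d:ℤ) ω - 1) * (gd p u * ell p u))
        = fun u => gg p u ^ (hitTime X (d:ℤ) ω - 1) * gd p u * ell p u :=
      funext fun u => (mul_assoc _ _ _).symm
    rw [hre, h, inv_pow, one_div]
  rw [integral_congr_ae hcongr]
  exact swap_key hp hp1 hmeas hindep hup hdown hd hfin (fun u => gd p u * ell p u)
    ((continuous_gd hp hp1).measurable.mul measurable_ell)
    (fun u => (1/p) * (-Real.log u))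
    ((integrableOn_log01.neg).const_mul (1/p))
    (fun u hu => by
      rw [abs_of_nonneg (mul_nonneg (gd_nonneg hp hp1 hu.1 hu.2) (ell_nonneg hp hp1 hu.1 hu.2))]
      exact mul_le_mul (gd_le hp hp1 hu.1 hu.2) (ell_le hp hp1 hu.1 hu.2)
        (ell_nonneg hp hp1 hu.1 hu.2) (by positivity))

end fubini

end
end RWaux

/-- `Var[R_{N_d}/N_d] = (d²/4){∫₀¹ u^(d-1) h_p ℓ_p du - (∫₀¹ u^(d-1) h_p du)²}` with
`h_p(u) = (p - qu²)/(p + qu²)` and `ℓ_p(u) = ln((p + qu²)/u)`. -/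
theorem stmt_7 {Ω : Type*} [MeasurableSpace Ω] (P : Measure Ω) [IsProbabilityMeasure P]
    (p : ℝ) (hp : p ∈ Set.Ico (1/2 : ℝ) 1)
    (X : ℕ → Ω → ℤ) (hmeas : ∀ n, Measurable (X n))
    (hindep : iIndepFun X P)
    (hup : ∀ n, P {ω | X n ω = 1} = ENNReal.ofReal p)
    (hdown : ∀ n, P {ω | X n ω = -1} = ENNReal.ofReal (1 - p))
    (d : ℕ) (hd : 1 ≤ d)
    (hfin : ∀ᵐ ω ∂P, ∃ n, walkSum X n ω = (d : ℤ)) :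
    variance (fun ω => (wins X (hitTime X (d : ℤ) ω) ω : ℝ) / (hitTime X (d : ℤ) ω)) P
      = (d : ℝ) ^ 2 / 4 *
          ((∫ u in (0:ℝ)..1, u ^ (d - 1) * ((p - (1 - p) * u ^ 2) / (p + (1 - p) * u ^ 2))
              * Real.log ((p + (1 - p) * u ^ 2) / u))
           - (∫ u in (0:ℝ)..1,
                u ^ (d - 1) * ((p - (1 - p) * u ^ 2) / (p + (1 - p) * u ^ 2))) ^ 2) := by
  classical
  obtain ⟨hp2, hp1⟩ := hp
  set f : Ω → ℝ := fun ω => (wins X (hitTime X (d : ℤ) ω) ω : ℝ) / (hitTime X (d : ℤ) ω)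
    with hf_def
  have hNmeas : Measurable (hitTime X (d:ℤ)) := RWaux.measurable_hitTime hmeas _
  have hVmeas : Measurable (fun ω => ((hitTime X (d:ℤ) ω : ℝ))⁻¹) :=
    (measurable_of_countable (fun n : ℕ => ((n:ℝ))⁻¹)).comp hNmeas
  have hinv_nonneg : ∀ n : ℕ, (0:ℝ) ≤ ((n:ℝ))⁻¹ := fun n => by positivity
  have hinv_le_one : ∀ n : ℕ, ((n:ℝ))⁻¹ ≤ 1 := by
    intro n
    match n with
    | 0 => simp
    | Nat.succ m =>
      rw [inv_le_one₀ (by positivity)]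
      exact_mod_cast Nat.succ_le_succ (Nat.zero_le m)
  have hVint : Integrable (fun ω => ((hitTime X (d:ℤ) ω : ℝ))⁻¹) P := by
    apply RWaux.integrable_of_bound hVmeas 1
    intro ω
    rw [abs_of_nonneg (hinv_nonneg _)]
    exact hinv_le_one _
  have hV2int : Integrable (fun ω => (((hitTime X (d:ℤ) ω : ℝ))⁻¹)^2) P := by
    apply RWaux.integrable_of_bound (hVmeas.pow_const 2) 1
    intro ω
    rw [abs_of_nonneg (sq_nonneg _)]
    exact pow_le_one₀ (hinv_nonneg _) (hinv_le_one _)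
  have hfmeas : Measurable f := by
    apply RWaux.measurable_comp_nat hNmeas (g := fun k ω => (wins X k ω : ℝ) / (k:ℝ))
    intro k
    exact (measurable_of_countable (fun m : ℕ => ((m:ℝ))/(k:ℝ))).comp
      (RWaux.measurable_wins hmeas k)
  have hfbound : ∀ ω, 0 ≤ f ω ∧ f ω ≤ 1 := by
    intro ω
    have hw : wins X (hitTime X (d:ℤ) ω) ω ≤ hitTime X (d:ℤ) ω :=
      le_trans (Finset.card_filter_le _ _) (le_of_eq (Finset.card_range _))
    constructor
    · rw [hf_def]; positivity
    · rcases Nat.eq_zero_or_pos (hitTime X (d:ℤ) ω) with h | h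
      · rw [hf_def]; simp [h]
      · rw [hf_def]
        simp only
        rw [div_le_one (by exact_mod_cast h)]
        exact_mod_cast hw
  have hfmem : MemLp f 2 P :=
    MemLp.of_bound hfmeas.aestronglyMeasurable 1 (ae_of_all _ fun ω => by
      rw [Real.norm_eq_abs, abs_of_nonneg (hfbound ω).1]; exact (hfbound ω).2)
  have hae : f =ᵐ[P] fun ω => 1/2 + ((d:ℝ)/2) * ((hitTime X (d:ℤ) ω : ℝ))⁻¹ := by
    filter_upwards [hfin, RWaux.ae_pm1 hp2 hp1 hmeas hup hdown] with ω hex hpm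
    have hN1 : 1 ≤ hitTime X (d:ℤ) ω := RWaux.hitTime_pos hd hex
    have h2w := RWaux.two_mul_wins hpm (hitTime X (d:ℤ) ω)
    rw [RWaux.hit_spec hex] at h2w
    have hcast : 2 * (wins X (hitTime X (d:ℤ) ω) ω : ℝ)
        = (d:ℝ) + (hitTime X (d:ℤ) ω : ℝ) := by exact_mod_cast h2w
    have hNne : ((hitTime X (d:ℤ) ω : ℝ)) ≠ 0 := Nat.cast_ne_zero.mpr (by omega)
    rw [hf_def]
    simp only
    have hwv : (wins X (hitTime X (d:ℤ) ω) ω : ℝ)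
        = ((d:ℝ) + (hitTime X (d:ℤ) ω : ℝ))/2 := by linarith
    rw [hwv]
    field_simp
    ring
  have hEf : ∫ ω, f ω ∂P
      = 1/2 + ((d:ℝ)/2) * (∫ ω, ((hitTime X (d:ℤ) ω : ℝ))⁻¹ ∂P) := by
    rw [integral_congr_ae hae, integral_add (integrable_const _) (hVint.const_mul _),
      integral_const, integral_const_mul]
    simp
  have hEf2 : ∫ ω, (f ω)^2 ∂P
      = 1/4 + ((d:ℝ)/2) * (∫ ω, ((hitTime X (d:ℤ) ω : ℝ))⁻¹ ∂P)
        + ((d:ℝ)^2/4) * (∫ ω, (((hitTime X (d:ℤ) ω : ℝ))⁻¹)^2 ∂P) := by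
    have hae2 : (fun ω => (f ω)^2) =ᵐ[P] fun ω =>
        1/4 + ((d:ℝ)/2) * ((hitTime X (d:ℤ) ω : ℝ))⁻¹
          + ((d:ℝ)^2/4) * (((hitTime X (d:ℤ) ω : ℝ))⁻¹)^2 := by
      filter_upwards [hae] with ω hω
      rw [hω]; ring
    have hint1 : Integrable (fun ω =>
        1/4 + ((d:ℝ)/2) * ((hitTime X (d:ℤ) ω : ℝ))⁻¹) P :=
      (integrable_const _).add (hVint.const_mul _)
    rw [integral_congr_ae hae2,
      integral_add hint1 (hV2int.const_mul _),
      integral_add (integrable_const _) (hVint.const_mul _),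
      integral_const, integral_const_mul, integral_const_mul]
    simp
  have hIc1 : (∫ u in (0:ℝ)..1,
        u ^ (d - 1) * ((p - (1 - p) * u ^ 2) / (p + (1 - p) * u ^ 2)))
      = ∫ ω, ((hitTime X (d:ℤ) ω : ℝ))⁻¹ ∂P := by
    rw [RWaux.E_inv hp2 hp1 hmeas hindep hup hdown hd hfin,
      intervalIntegral.integral_of_le zero_le_one]
    apply setIntegral_congr_fun measurableSet_Ioc
    rintro u ⟨hu0, hu1⟩
    dsimp only
    have hden := RWaux.den_pos hp2 hp1 u
    have hpow : u ^ d = u ^ (d-1) * u := by rw [← pow_succ, Nat.sub_add_cancel hd]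
    unfold RWaux.gd
    unfold RWaux.den at hden ⊢
    rw [hpow]
    field_simp
  have hIc2 : (∫ u in (0:ℝ)..1,
        u ^ (d - 1) * ((p - (1 - p) * u ^ 2) / (p + (1 - p) * u ^ 2))
          * Real.log ((p + (1 - p) * u ^ 2) / u))
      = ∫ ω, (((hitTime X (d:ℤ) ω : ℝ))⁻¹)^2 ∂P := by
    rw [RWaux.E_inv_sq hp2 hp1 hmeas hindep hup hdown hd hfin,
      intervalIntegral.integral_of_le zero_le_one]
    apply setIntegral_congr_fun measurableSet_Ioc
    rintro u ⟨hu0, hu1⟩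
    dsimp only
    have hden := RWaux.den_pos hp2 hp1 u
    have hpow : u ^ d = u ^ (d-1) * u := by rw [← pow_succ, Nat.sub_add_cancel hd]
    unfold RWaux.gd RWaux.ell
    unfold RWaux.den at hden ⊢
    rw [hpow]
    field_simp
  rw [variance_eq_sub hfmem,
    show (f ^ 2 : Ω → ℝ) = fun ω => (f ω)^2 from rfl, hEf2, hEf, hIc2, hIc1]
  ring
end

section
/- Fix p ∈ [1/2,1). For every positive integer d, E[R_{N_d}/N_d] > E[R_{N_{d+1}}/N_{d+1}]; i.e., the expected win rate at the first-passage time is strictly decreasing in the threshold d. -/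
open MeasureTheory ProbabilityTheory Real

namespace Stmt8
def bval (b : Bool) : ℤ := if b then 1 else -1

lemma bval_injective : Function.Injective bval := by
  intro a b h; cases a <;> cases b <;> simp [bval] at h ⊢

def pSum (c : ℕ → Bool) (l : ℕ) : ℤ := ∑ k ∈ Finset.range l, bval (c k)

def extB {n : ℕ} (t : Fin n → Bool) : ℕ → Bool := fun k => if h : k < n then t ⟨k, h⟩ else true

lemma extB_eq {n : ℕ} (t : Fin n → Bool) {k : ℕ} (h : k < n) : extB t k = t ⟨k, h⟩ := by
  simp [extB, h]

lemma extB_inj {n : ℕ} {t t' : Fin n → Bool} (h : ∀ k < n, extB t k = extB t' k) : t = t' := by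
  funext k
  have := h k k.2
  rwa [extB_eq t k.2, extB_eq t' k.2] at this

noncomputable def FPfin (n : ℕ) : Finset (Fin n → Bool) :=
  @Finset.filter _ (fun t => pSum (extB t) n = 1 ∧ ∀ l < n, pSum (extB t) l ≤ 0)
    (fun _ => Classical.dec _) Finset.univ

lemma mem_FPfin {n : ℕ} {t : Fin n → Bool} :
    t ∈ FPfin n ↔ pSum (extB t) n = 1 ∧ ∀ l < n, pSum (extB t) l ≤ 0 := by
  simp [FPfin]

def patt3 : Fin 3 → Bool := ![false, true, true]

lemma patt3_mem : patt3 ∈ FPfin 3 := by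
  rw [mem_FPfin]
  constructor
  · simp [pSum, Finset.sum_range_succ, extB, patt3, bval]
  · intro l hl
    interval_cases l <;> simp [pSum, Finset.sum_range_succ, extB, patt3, bval]

def patt1 : Fin 1 → Bool := ![true]

lemma patt1_mem : patt1 ∈ FPfin 1 := by
  rw [mem_FPfin]
  constructor
  · simp [pSum, Finset.sum_range_succ, extB, patt1, bval]
  · intro l hl
    interval_cases l <;> simp [pSum]

def appB (m : ℕ) (c c' : ℕ → Bool) : ℕ → Bool := fun k => if k < m then c k else c' (k - m)

lemma appB_left {m : ℕ} {c c' : ℕ → Bool} {k : ℕ} (h : k < m) : appB m c c' k = c k := by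
  simp [appB, h]

lemma appB_right (m : ℕ) (c c' : ℕ → Bool) (k : ℕ) : appB m c c' (m + k) = c' k := by
  simp [appB, Nat.add_sub_cancel_left]

noncomputable def pv (p : ℝ) (b : Bool) : ENNReal :=
  if b then ENNReal.ofReal p else ENNReal.ofReal (1 - p)

noncomputable def W (p : ℝ) (n : ℕ) (c : ℕ → Bool) : ENNReal := ∏ k ∈ Finset.range n, pv p (c k)

lemma W_append (p : ℝ) (m n : ℕ) (c c' : ℕ → Bool) :
    W p (m + n) (appB m c c') = W p m c * W p n c' := by
  rw [W, Finset.prod_range_add]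
  congr 1
  · exact Finset.prod_congr rfl fun k hk => by
      rw [appB_left (Finset.mem_range.mp hk)]
  · exact Finset.prod_congr rfl fun k _ => by rw [appB_right]

noncomputable def w (p : ℝ) (n : ℕ) : ENNReal := ∑ t ∈ FPfin n, W p n (extB t)

section
variable {Ω : Type*} [MeasurableSpace Ω] {P : Measure Ω} [IsProbabilityMeasure P]
  {p : ℝ} {X : ℕ → Ω → ℤ}

def Cyl (X : ℕ → Ω → ℤ) (a n : ℕ) (c : ℕ → Bool) : Set Ω :=
  {ω | ∀ k < n, X (a + k) ω = bval (c k)}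

def Seg (X : ℕ → Ω → ℤ) (a n : ℕ) : Set Ω :=
  {ω | (∀ k < n, X (a + k) ω = 1 ∨ X (a + k) ω = -1) ∧
    (∑ k ∈ Finset.range n, X (a + k) ω = 1) ∧
    ∀ l < n, (∑ k ∈ Finset.range l, X (a + k) ω) ≤ 0}

omit [IsProbabilityMeasure P] in
lemma cyl_measurable (hmeas : ∀ n, Measurable (X n)) (a n : ℕ) (c : ℕ → Bool) :
    MeasurableSet (Cyl X a n c) := by
  have : Cyl X a n c = ⋂ (k : ℕ) (_ : k < n), {ω | X (a + k) ω = bval (c k)} := by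
    ext ω; simp [Cyl]
  rw [this]
  exact MeasurableSet.iInter fun k => MeasurableSet.iInter fun _ =>
    (hmeas (a + k)) (MeasurableSet.of_discrete (s := {bval (c k)}))

omit [IsProbabilityMeasure P] in
lemma seg_measurable (hmeas : ∀ n, Measurable (X n)) (a n : ℕ) :
    MeasurableSet (Seg X a n) := by
  have h1 : ∀ (l : ℕ), Measurable (fun ω => ∑ k ∈ Finset.range l, X (a + k) ω) := by
    intro l
    exact Finset.measurable_sum _ fun k _ => hmeas (a + k)
  have : Seg X a n = (⋂ (k : ℕ) (_ : k < n), ({ω | X (a + k) ω = 1} ∪ {ω | X (a + k) ω = -1}))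
      ∩ ((fun ω => ∑ k ∈ Finset.range n, X (a + k) ω) ⁻¹' {1})
      ∩ (⋂ (l : ℕ) (_ : l < n), (fun ω => ∑ k ∈ Finset.range l, X (a + k) ω) ⁻¹' Set.Iic 0) := by
    ext ω
    simp only [Seg, Set.mem_inter_iff, Set.mem_iInter, Set.mem_setOf_eq, Set.mem_union,
      Set.mem_preimage, Set.mem_singleton_iff, Set.mem_Iic]
    tauto
  rw [this]
  refine MeasurableSet.inter (MeasurableSet.inter ?_ ?_) ?_
  · exact MeasurableSet.iInter fun k => MeasurableSet.iInter fun _ =>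
      ((hmeas (a + k)) (MeasurableSet.of_discrete (s := {1}))).union
        ((hmeas (a + k)) (MeasurableSet.of_discrete (s := {-1})))
  · exact (h1 n) MeasurableSet.of_discrete
  · exact MeasurableSet.iInter fun l => MeasurableSet.iInter fun _ =>
      (h1 l) MeasurableSet.of_discrete

omit [IsProbabilityMeasure P] in
lemma cyl_sums {a n : ℕ} {c : ℕ → Bool} {ω : Ω} (h : ∀ k < n, X (a + k) ω = bval (c k))
    {l : ℕ} (hl : l ≤ n) : ∑ k ∈ Finset.range l, X (a + k) ω = pSum c l := by
  exact Finset.sum_congr rfl fun k hk => h k (lt_of_lt_of_le (Finset.mem_range.mp hk) hl)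

omit [IsProbabilityMeasure P] in
lemma seg_eq_iUnion (a n : ℕ) :
    Seg X a n = ⋃ t ∈ FPfin n, Cyl X a n (extB t) := by
  ext ω
  simp only [Set.mem_iUnion, Set.mem_setOf_eq]
  constructor
  · rintro ⟨hpm, hsum, hpart⟩
    refine ⟨fun k => decide (X (a + k) ω = 1), ?_, ?_⟩
    · have hcyl : ∀ k < n, X (a + k) ω = bval (extB (fun k : Fin n => decide (X (a + k) ω = 1)) k) := by
        intro k hk
        rw [extB_eq _ hk]
        rcases hpm k hk with h | h <;> simp [h, bval]
      rw [mem_FPfin]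
      constructor
      · rw [← cyl_sums hcyl le_rfl]; exact hsum
      · intro l hl
        rw [← cyl_sums hcyl hl.le]; exact hpart l hl
    · intro k hk
      rw [extB_eq _ hk]
      rcases hpm k hk with h | h <;> simp [h, bval]
  · rintro ⟨t, ht, hcyl⟩
    rw [mem_FPfin] at ht
    refine ⟨fun k hk => ?_, ?_, fun l hl => ?_⟩
    · rw [hcyl k hk]; cases extB t k <;> simp [bval]
    · rw [cyl_sums hcyl le_rfl]; exact ht.1
    · rw [cyl_sums hcyl hl.le]; exact ht.2 l hl

omit [IsProbabilityMeasure P] in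
lemma cyl_append (a m n : ℕ) (c c' : ℕ → Bool) :
    Cyl X a (m + n) (appB m c c') = Cyl X a m c ∩ Cyl X (a + m) n c' := by
  ext ω
  simp only [Cyl, Set.mem_inter_iff, Set.mem_setOf_eq]
  constructor
  · intro h
    refine ⟨fun k hk => ?_, fun k hk => ?_⟩
    · have := h k (lt_of_lt_of_le hk (Nat.le_add_right m n))
      rwa [appB_left hk] at this
    · have := h (m + k) (by omega)
      rwa [appB_right, ← Nat.add_assoc] at this
  · rintro ⟨h1, h2⟩ k hk
    by_cases hkm : k < m
    · rw [appB_left hkm]; exact h1 k hkm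
    · have hk' : k = m + (k - m) := by omega
      rw [hk', appB_right, ← Nat.add_assoc]
      exact h2 (k - m) (by omega)

omit [IsProbabilityMeasure P] in
lemma cyl_disjoint {a q : ℕ} {t t' : Fin q → Bool} (hne : t ≠ t') (n n' : ℕ) (c c' : ℕ → Bool) :
    Disjoint (Cyl X a (q + n) (appB q (extB t) c)) (Cyl X a (q + n') (appB q (extB t') c')) := by
  rw [Set.disjoint_left]
  intro ω h1 h2
  apply hne
  apply extB_inj (fun k hk => ?_)
  apply bval_injective
  have e1 := h1 k (lt_of_lt_of_le hk (Nat.le_add_right q n))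
  have e2 := h2 k (lt_of_lt_of_le hk (Nat.le_add_right q n'))
  rw [appB_left hk] at e1 e2
  rw [← e1, ← e2]

lemma cyl_prob (hindep : iIndepFun X P)
    (hup : ∀ n, P {ω | X n ω = 1} = ENNReal.ofReal p)
    (hdown : ∀ n, P {ω | X n ω = -1} = ENNReal.ofReal (1 - p))
    (n : ℕ) (c : ℕ → Bool) : P (Cyl X 0 n c) = W p n c := by
  have key := hindep.measure_inter_preimage_eq_mul (Finset.range n)
    (sets := fun k => {bval (c k)}) (fun i _ => trivial)
  have hc : Cyl X 0 n c = ⋂ i ∈ Finset.range n, X i ⁻¹' {bval (c i)} := by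
    ext ω
    simp [Cyl, Set.mem_iInter, Finset.mem_range]
  rw [hc, key]
  apply Finset.prod_congr rfl
  intro k _
  have : X k ⁻¹' {bval (c k)} = {ω | X k ω = bval (c k)} := rfl
  rw [this]
  cases hck : c k <;> simp [bval, pv, hup k, hdown k]

end

def extN {D : ℕ} (m : Fin D → ℕ) (k : ℕ) : ℕ := if h : k < D then m ⟨k, h⟩ else 0

def psum {D : ℕ} (m : Fin D → ℕ) (e : ℕ) : ℕ := ∑ k ∈ Finset.range e, extN m k

lemma psum_succ {D : ℕ} (m : Fin D → ℕ) (e : ℕ) :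
    psum m (e + 1) = psum m e + extN m e := Finset.sum_range_succ _ _

lemma psum_mono {D : ℕ} (m : Fin D → ℕ) : Monotone (psum m) := by
  intro i j hij
  exact Finset.sum_le_sum_of_subset (Finset.range_subset_range.mpr hij)

section
variable {Ω : Type*} [MeasurableSpace Ω] {P : Measure Ω} [IsProbabilityMeasure P]
  {p : ℝ} {X : ℕ → Ω → ℤ}

def Ev (X : ℕ → Ω → ℤ) {D : ℕ} (m : Fin D → ℕ) (J : ℕ) : Set Ω :=
  {ω | ∀ j < J, ω ∈ Seg X (psum m j) (extN m j)}

omit [IsProbabilityMeasure P] in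
lemma ev_succ {D : ℕ} (m : Fin D → ℕ) (J : ℕ) :
    Ev X m (J + 1) = Ev X m J ∩ Seg X (psum m J) (extN m J) := by
  ext ω
  simp only [Ev, Set.mem_inter_iff, Set.mem_setOf_eq]
  constructor
  · intro h
    exact ⟨fun j hj => h j (Nat.lt_succ_of_lt hj), h J (Nat.lt_succ_self J)⟩
  · rintro ⟨h1, h2⟩ j hj
    rcases Nat.lt_succ_iff_lt_or_eq.mp hj with h | h
    · exact h1 j h
    · subst h; exact h2

omit [IsProbabilityMeasure P] in
lemma ev_measurable (hmeas : ∀ n, Measurable (X n)) {D : ℕ} (m : Fin D → ℕ) (J : ℕ) :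
    MeasurableSet (Ev X m J) := by
  have : Ev X m J = ⋂ (j : ℕ) (_ : j < J), Seg X (psum m j) (extN m j) := by
    ext ω; simp [Ev]
  rw [this]
  exact MeasurableSet.iInter fun j => MeasurableSet.iInter fun _ =>
    seg_measurable hmeas _ _

lemma ev_cyl_prob (hmeas : ∀ n, Measurable (X n))
    (hindep : iIndepFun X P)
    (hup : ∀ n, P {ω | X n ω = 1} = ENNReal.ofReal p)
    (hdown : ∀ n, P {ω | X n ω = -1} = ENNReal.ofReal (1 - p))
    {D : ℕ} (m : Fin D → ℕ) :
    ∀ (J n : ℕ) (c : ℕ → Bool), P (Ev X m J ∩ Cyl X (psum m J) n c)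
      = (∏ j ∈ Finset.range J, w p (extN m j)) * W p n c := by
  intro J
  induction J with
  | zero =>
    intro n c
    have h1 : Ev X m 0 = Set.univ := by ext ω; simp [Ev]
    have h2 : psum m 0 = 0 := rfl
    rw [h1, h2, Set.univ_inter, cyl_prob hindep hup hdown, Finset.range_zero,
      Finset.prod_empty, one_mul]
  | succ J ih =>
    intro n c
    set a := psum m J with ha
    set q := extN m J with hq
    have hps : psum m (J + 1) = a + q := psum_succ m J
    have hset : Ev X m (J + 1) ∩ Cyl X (psum m (J + 1)) n c
        = ⋃ t ∈ FPfin q, (Ev X m J ∩ Cyl X a (q + n) (appB q (extB t) c)) := by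
      rw [ev_succ, hps, Set.inter_assoc]
      have hseg : Seg X a q ∩ Cyl X (a + q) n c
          = ⋃ t ∈ FPfin q, Cyl X a (q + n) (appB q (extB t) c) := by
        rw [seg_eq_iUnion, Set.iUnion₂_inter]
        apply Set.iUnion₂_congr
        intro t _
        rw [cyl_append]
      rw [hseg, Set.inter_iUnion₂]
    rw [hset]
    rw [measure_biUnion_finset ?_ ?_]
    · have hterm : ∀ t ∈ FPfin q, P (Ev X m J ∩ Cyl X a (q + n) (appB q (extB t) c))
          = ((∏ j ∈ Finset.range J, w p (extN m j)) * W p n c) * W p q (extB t) := by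
        intro t _
        rw [ih (q + n) (appB q (extB t) c), W_append]
        ring
      rw [Finset.sum_congr rfl hterm, ← Finset.mul_sum]
      have hw : ∑ t ∈ FPfin q, W p q (extB t) = w p q := rfl
      rw [hw, Finset.prod_range_succ]
      ring
    · intro t ht t' ht' hne
      exact Set.disjoint_left.mpr fun ω hω hω' =>
        (Set.disjoint_left.mp (cyl_disjoint hne n n c c) hω.2 hω'.2)
    · intro t _
      exact (ev_measurable hmeas m J).inter (cyl_measurable hmeas _ _ _)


omit [IsProbabilityMeasure P] in
lemma walkSum_add (ω : Ω) (a l : ℕ) :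
    walkSum X (a + l) ω = walkSum X a ω + ∑ k ∈ Finset.range l, X (a + k) ω := by
  unfold walkSum
  rw [Finset.sum_range_add]

omit [IsProbabilityMeasure P] in
lemma ev_extN_pos {D : ℕ} {m : Fin D → ℕ} {J : ℕ} {ω : Ω} (h : ω ∈ Ev X m J) :
    ∀ j < J, 1 ≤ extN m j := by
  intro j hj
  have hseg := h j hj
  rcases Nat.eq_zero_or_pos (extN m j) with h0 | h0
  · exfalso
    have := hseg.2.1
    rw [h0] at this
    simp at this
  · exact h0

omit [IsProbabilityMeasure P] in
lemma ev_walkSum {D : ℕ} {m : Fin D → ℕ} {J : ℕ} {ω : Ω} (h : ω ∈ Ev X m J) :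
    ∀ j ≤ J, walkSum X (psum m j) ω = (j : ℤ) := by
  intro j
  induction j with
  | zero => intro _; simp [psum, walkSum]
  | succ j ihj =>
    intro hj
    have hseg := h j (Nat.lt_of_succ_le hj)
    rw [psum_succ, walkSum_add, ihj (Nat.le_of_succ_le hj), hseg.2.1]
    push_cast
    ring

omit [IsProbabilityMeasure P] in
lemma ev_walkSum_lt {D : ℕ} {m : Fin D → ℕ} {J : ℕ} {ω : Ω} (h : ω ∈ Ev X m J) :
    ∀ e ≤ J, ∀ n < psum m e, walkSum X n ω < (e : ℤ) := by
  intro e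
  induction e with
  | zero => intro _ n hn; simp [psum] at hn
  | succ e ihe =>
    intro he n hn
    by_cases hne : n < psum m e
    · have := ihe (Nat.le_of_succ_le he) n hne
      push_cast at this ⊢
      omega
    · have hle : psum m e ≤ n := Nat.le_of_not_lt hne
      have hseg := h e (Nat.lt_of_succ_le he)
      have hn' : n = psum m e + (n - psum m e) := by omega
      have hlt : n - psum m e < extN m e := by
        have := psum_succ m e
        rw [psum_succ m e] at hn
        omega
      have hws : walkSum X n ω = walkSum X (psum m e) ω
          + ∑ k ∈ Finset.range (n - psum m e), X (psum m e + k) ω := by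
        nth_rewrite 1 [hn']
        rw [walkSum_add]
      rw [hws, ev_walkSum h e (Nat.le_of_succ_le he)]
      have hpart := hseg.2.2 (n - psum m e) hlt
      push_cast
      omega

omit [IsProbabilityMeasure P] in
lemma ev_hitTime {D : ℕ} {m : Fin D → ℕ} {J : ℕ} {ω : Ω} (h : ω ∈ Ev X m J) :
    ∀ e ≤ J, hitTime X (e : ℤ) ω = psum m e := by
  intro e he
  have hmem : psum m e ∈ {n : ℕ | walkSum X n ω = (e : ℤ)} := ev_walkSum h e he
  have h1 : hitTime X (e : ℤ) ω ≤ psum m e := Nat.sInf_le hmem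
  have h2 : walkSum X (hitTime X (e : ℤ) ω) ω = (e : ℤ) :=
    Nat.sInf_mem (Set.nonempty_of_mem hmem)
  rcases Nat.lt_or_ge (hitTime X (e : ℤ) ω) (psum m e) with hlt | hge
  · exfalso
    have := ev_walkSum_lt h e he _ hlt
    rw [h2] at this
    exact lt_irrefl _ this
  · omega

omit [IsProbabilityMeasure P] in
lemma ev_steps {D : ℕ} {m : Fin D → ℕ} {J : ℕ} {ω : Ω} (h : ω ∈ Ev X m J) :
    ∀ k < psum m J, X k ω = 1 ∨ X k ω = -1 := by
  induction J with
  | zero => intro k hk; simp [psum] at hk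
  | succ J ihJ =>
    intro k hk
    have hJ : ω ∈ Ev X m J := fun j hj => h j (Nat.lt_succ_of_lt hj)
    by_cases hkJ : k < psum m J
    · exact ihJ hJ k hkJ
    · have hseg := h J (Nat.lt_succ_self J)
      have hk' : k = psum m J + (k - psum m J) := by omega
      have hlt : k - psum m J < extN m J := by
        rw [psum_succ m J] at hk
        omega
      rw [hk']
      exact hseg.1 _ hlt

omit [IsProbabilityMeasure P] in
lemma wins_identity {ω : Ω} {n : ℕ} (h : ∀ k < n, X k ω = 1 ∨ X k ω = -1) :
    2 * (wins X n ω : ℤ) = (n : ℤ) + walkSum X n ω := by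
  induction n with
  | zero => simp [wins, walkSum]
  | succ n ihn =>
    have hstep : ∀ k < n, X k ω = 1 ∨ X k ω = -1 := fun k hk => h k (Nat.lt_succ_of_lt hk)
    have hw : walkSum X (n + 1) ω = walkSum X n ω + X n ω := Finset.sum_range_succ _ _
    have hwin : (wins X (n + 1) ω : ℤ)
        = (wins X n ω : ℤ) + (if X n ω = 1 then 1 else 0) := by
      unfold wins
      rw [Finset.range_add_one, Finset.filter_insert]
      by_cases hx : X n ω = 1
      · rw [if_pos hx, if_pos hx, Finset.card_insert_of_notMem (by simp)]
        push_cast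
        ring
      · rw [if_neg hx, if_neg hx]
        simp
    have ih := ihn hstep
    rcases h n (Nat.lt_succ_self n) with hx | hx
    · rw [hwin, hw, hx, if_pos rfl]
      push_cast
      omega
    · rw [hwin, hw, hx, if_neg (by norm_num)]
      push_cast
      omega


def good (X : ℕ → Ω → ℤ) : Set Ω :=
  {ω | (∀ n, X n ω = 1 ∨ X n ω = -1) ∧ ∀ e : ℕ, ∃ n, walkSum X n ω = (e : ℤ)}

omit [IsProbabilityMeasure P] in
lemma reach {ω : Ω} (hpm : ∀ n, X n ω = 1 ∨ X n ω = -1) :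
    ∀ (n e : ℕ), (e : ℤ) ≤ walkSum X n ω → ∃ k ≤ n, walkSum X k ω = (e : ℤ) := by
  intro n
  induction n with
  | zero =>
    intro e he
    have h0 : walkSum X 0 ω = 0 := by simp [walkSum]
    rw [h0] at he
    have : e = 0 := by exact_mod_cast Int.le_antisymm he (Int.ofNat_nonneg e)
    exact ⟨0, le_rfl, by rw [h0, this]; simp⟩
  | succ n ihn =>
    intro e he
    by_cases hle : (e : ℤ) ≤ walkSum X n ω
    · obtain ⟨k, hk, hk'⟩ := ihn e hle
      exact ⟨k, Nat.le_succ_of_le hk, hk'⟩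
    · push_neg at hle
      have hw : walkSum X (n + 1) ω = walkSum X n ω + X n ω := Finset.sum_range_succ _ _
      refine ⟨n + 1, le_rfl, ?_⟩
      rcases hpm n with hx | hx <;> rw [hw, hx] at he ⊢ <;> omega

omit [IsProbabilityMeasure P] in
lemma good_walkSum_hit {ω : Ω} (hg : ω ∈ good X) (e : ℕ) :
    walkSum X (hitTime X (e : ℤ) ω) ω = (e : ℤ) := by
  obtain ⟨n, hn⟩ := hg.2 e
  exact Nat.sInf_mem (Set.nonempty_of_mem (show n ∈ {n : ℕ | walkSum X n ω = (e : ℤ)} from hn))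

omit [IsProbabilityMeasure P] in
lemma good_hit_lt {ω : Ω} (hg : ω ∈ good X) (e : ℕ) :
    hitTime X (e : ℤ) ω < hitTime X ((e : ℤ) + 1) ω := by
  have h1 : walkSum X (hitTime X ((e : ℤ) + 1) ω) ω = (e : ℤ) + 1 := by
    have := good_walkSum_hit hg (e + 1)
    push_cast at this ⊢
    exact this
  obtain ⟨k, hk, hk'⟩ := reach hg.1 (hitTime X ((e : ℤ) + 1) ω) e (by rw [h1]; omega)
  have h2 : hitTime X (e : ℤ) ω ≤ k := Nat.sInf_le hk'
  have h3 : hitTime X (e : ℤ) ω ≠ hitTime X ((e : ℤ) + 1) ω := by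
    intro hcontra
    have := good_walkSum_hit hg e
    rw [hcontra, h1] at this
    omega
  omega

noncomputable def mOf (X : ℕ → Ω → ℤ) (D : ℕ) (ω : Ω) : Fin D → ℕ :=
  fun j => hitTime X (((j : ℕ) + 1 : ℕ) : ℤ) ω - hitTime X ((j : ℕ) : ℤ) ω

omit [IsProbabilityMeasure P] in
lemma hitTime_zero (ω : Ω) : hitTime X (0 : ℤ) ω = 0 := by
  have : (0 : ℕ) ∈ {n : ℕ | walkSum X n ω = (0 : ℤ)} := by simp [walkSum]
  exact Nat.eq_zero_of_le_zero (Nat.sInf_le this)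

omit [IsProbabilityMeasure P] in
lemma good_psum {ω : Ω} (hg : ω ∈ good X) (D : ℕ) :
    ∀ e ≤ D, psum (mOf X D ω) e = hitTime X (e : ℤ) ω := by
  intro e
  induction e with
  | zero =>
    intro _
    have : psum (mOf X D ω) 0 = 0 := rfl
    rw [this]
    exact (hitTime_zero ω).symm
  | succ e ihe =>
    intro he
    have heD : e < D := Nat.lt_of_succ_le he
    rw [psum_succ, ihe (Nat.le_of_succ_le he)]
    have hext : extN (mOf X D ω) e = hitTime X (((e : ℕ) + 1 : ℕ) : ℤ) ω
        - hitTime X ((e : ℕ) : ℤ) ω := by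
      unfold extN mOf
      rw [dif_pos heD]
    have hlt := good_hit_lt hg e
    have hcast : ((e + 1 : ℕ) : ℤ) = (e : ℤ) + 1 := by push_cast; ring
    rw [hext, hcast]
    omega

omit [IsProbabilityMeasure P] in
lemma good_mem_ev {ω : Ω} (hg : ω ∈ good X) (D : ℕ) : ω ∈ Ev X (mOf X D ω) D := by
  intro j hj
  set a := psum (mOf X D ω) j with hA
  have haN : a = hitTime X ((j : ℕ) : ℤ) ω := good_psum hg D j hj.le
  have hqN : extN (mOf X D ω) j = hitTime X (((j : ℕ) + 1 : ℕ) : ℤ) ω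
      - hitTime X ((j : ℕ) : ℤ) ω := by
    unfold extN mOf
    rw [dif_pos hj]
  set q := extN (mOf X D ω) j with hQ
  have hcast : ((j + 1 : ℕ) : ℤ) = (j : ℤ) + 1 := by push_cast; ring
  have hlt := good_hit_lt hg j
  have haq : a + q = hitTime X ((j : ℤ) + 1) ω := by
    rw [haN, hqN, hcast] at *
    omega
  have hwa : walkSum X a ω = (j : ℤ) := by rw [haN]; exact good_walkSum_hit hg j
  have hwaq : walkSum X (a + q) ω = (j : ℤ) + 1 := by
    rw [haq, ← hcast]
    have := good_walkSum_hit hg (j + 1)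
    push_cast at this ⊢
    exact this
  refine ⟨fun k _ => hg.1 (a + k), ?_, ?_⟩
  · have := walkSum_add (X := X) ω a q
    rw [hwa, hwaq] at this
    omega
  · intro l hl
    by_contra hpos
    push_neg at hpos
    have hws : walkSum X (a + l) ω = (j : ℤ) + ∑ k ∈ Finset.range l, X (a + k) ω := by
      rw [walkSum_add, hwa]
    have hge : ((j : ℕ) : ℤ) + 1 ≤ walkSum X (a + l) ω := by omega
    obtain ⟨k, hk, hk'⟩ := reach hg.1 (a + l) (j + 1) (by push_cast at hge ⊢; omega)
    have h2 : hitTime X (((j : ℕ) + 1 : ℕ) : ℤ) ω ≤ k := Nat.sInf_le hk'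
    rw [hcast] at h2
    omega

end

lemma sum_frac_pos {D : ℕ} (hD : 2 ≤ D) (x : Fin D → ℝ) (hx : ∀ i, 1 ≤ x i)
    (hne : ∃ i j, x i ≠ x j) :
    0 < ∑ i, (((D : ℝ) - 1)/(2*((∑ j, x j) - x i)) - (D : ℝ)/(2*(∑ j, x j))) := by
  set t := ∑ j, x j with ht
  have hb : ∀ i, 1 ≤ t - x i := by
    intro i
    have h1 : t - x i = ∑ j ∈ Finset.univ.erase i, x j := by
      rw [ht, ← Finset.add_sum_erase _ x (Finset.mem_univ i)]
      ring
    have h2 : (Finset.univ.erase i).card = D - 1 := by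
      rw [Finset.card_erase_of_mem (Finset.mem_univ i), Finset.card_univ, Fintype.card_fin]
    have h3 : ∑ j ∈ Finset.univ.erase i, (1 : ℝ) ≤ ∑ j ∈ Finset.univ.erase i, x j :=
      Finset.sum_le_sum fun j _ => hx j
    rw [Finset.sum_const, h2, nsmul_eq_mul, mul_one] at h3
    have h4 : (1 : ℝ) ≤ ((D - 1 : ℕ) : ℝ) := by
      have h5 : 1 ≤ D - 1 := by omega
      exact_mod_cast h5
    rw [h1]
    linarith
  have hbpos : ∀ i, (0:ℝ) < t - x i := fun i => lt_of_lt_of_le one_pos (hb i)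
  have htpos : (0:ℝ) < t := by
    have := hbpos ⟨0, by omega⟩
    have := hx ⟨0, by omega⟩
    linarith
  -- rewrite each summand
  have hterm : ∀ i : Fin D, ((D : ℝ) - 1)/(2*(t - x i)) - (D : ℝ)/(2*t)
      = (((D : ℝ) * x i - t)/(t - x i)) / (2*t) := by
    intro i
    have hbne := (hbpos i).ne'
    field_simp
    ring
  rw [Finset.sum_congr rfl fun i _ => hterm i, ← Finset.sum_div]
  apply div_pos ?_ (by linarith)
  -- key double-sum identity
  have hA : ∀ i : Fin D, (D : ℝ) * x i - t = ∑ j, (x i - x j) := by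
    intro i
    rw [Finset.sum_sub_distrib, Finset.sum_const, Finset.card_univ, Fintype.card_fin,
      nsmul_eq_mul]
    try rw [ht]
    try ring
  have hsplit : ∑ i, (((D:ℝ) * x i - t)/(t - x i)) = ∑ i, ∑ j, (x i - x j)/(t - x i) := by
    apply Finset.sum_congr rfl
    intro i _
    rw [← Finset.sum_div, ← hA i]
  rw [hsplit]
  have hdouble : ∑ i, ∑ j, (x i - x j)/(t - x i)
      = (1/2) * ∑ i, ∑ j, (x i - x j)^2/((t - x i)*(t - x j)) := by
    have hswap : ∑ i, ∑ j, (x i - x j)/(t - x i) = ∑ i, ∑ j, (x j - x i)/(t - x j) := by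
      rw [Finset.sum_comm]
    have h2 : (2:ℝ) * ∑ i, ∑ j, (x i - x j)/(t - x i)
        = ∑ i, ∑ j, ((x i - x j)/(t - x i) + (x j - x i)/(t - x j)) := by
      simp only [Finset.sum_add_distrib]
      rw [← hswap]
      ring
    have h3 : ∀ i j : Fin D, (x i - x j)/(t - x i) + (x j - x i)/(t - x j)
        = (x i - x j)^2/((t - x i)*(t - x j)) := by
      intro i j
      have hi := (hbpos i).ne'
      have hj := (hbpos j).ne'
      field_simp
      ring
    have h4 : ∑ i, ∑ j, ((x i - x j)/(t - x i) + (x j - x i)/(t - x j))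
        = ∑ i, ∑ j, (x i - x j)^2/((t - x i)*(t - x j)) := by
      exact Finset.sum_congr rfl fun i _ => Finset.sum_congr rfl fun j _ => h3 i j
    linarith [h2, h4]
  rw [hdouble]
  obtain ⟨i0, j0, hij⟩ := hne
  have hpos : 0 < ∑ i, ∑ j, (x i - x j)^2/((t - x i)*(t - x j)) := by
    apply Finset.sum_pos' (fun i _ => Finset.sum_nonneg fun j _ =>
      div_nonneg (sq_nonneg _) (le_of_lt (mul_pos (hbpos i) (hbpos j))))
    refine ⟨i0, Finset.mem_univ i0, ?_⟩
    apply Finset.sum_pos' (fun j _ => div_nonneg (sq_nonneg _)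
      (le_of_lt (mul_pos (hbpos i0) (hbpos j))))
    refine ⟨j0, Finset.mem_univ j0, ?_⟩
    have hne0 : x i0 - x j0 ≠ 0 := sub_ne_zero.mpr hij
    apply div_pos (by positivity) (mul_pos (hbpos i0) (hbpos j0))
  linarith


lemma sum_frac_nonneg' {D : ℕ} (hD : 2 ≤ D) (x : Fin D → ℝ) (hx : ∀ i, 1 ≤ x i) :
    0 ≤ ∑ i, (((D : ℝ) - 1)/(2*((∑ j, x j) - x i)) - (D : ℝ)/(2*(∑ j, x j))) := by
  by_cases hne : ∃ i j, x i ≠ x j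
  · exact le_of_lt (sum_frac_pos hD x hx hne)
  · push_neg at hne
    have hxx : ∀ i : Fin D, x i = x ⟨0, by omega⟩ := fun i => hne i _
    have : ∀ i : Fin D, ((D : ℝ) - 1)/(2*((∑ j, x j) - x i)) - (D : ℝ)/(2*(∑ j, x j)) = 0 := by
      intro i
      have hsum : ∑ j, x j = (D : ℝ) * x i := by
        rw [Finset.sum_congr rfl fun j _ => (hxx j).trans (hxx i).symm]
        rw [Finset.sum_const, Finset.card_univ, Fintype.card_fin, nsmul_eq_mul]
      have hx1 : (1:ℝ) ≤ x i := hx i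
      have hD1 : (2:ℝ) ≤ (D:ℝ) := by exact_mod_cast hD
      rw [hsum]
      have h1 : (D:ℝ) * x i - x i = ((D:ℝ) - 1) * x i := by ring
      rw [h1]
      have hne1 : ((D:ℝ) - 1) * x i ≠ 0 := by
        have : (0:ℝ) < ((D:ℝ) - 1) * x i := by nlinarith
        exact this.ne'
      have hne2 : (D:ℝ) * x i ≠ 0 := by positivity
      have hD1' : (D:ℝ) - 1 ≠ 0 := by linarith
      field_simp
      ring
    rw [Finset.sum_congr rfl fun i _ => this i, Finset.sum_const, smul_zero]

section analytic

variable {D : ℕ} (wr : ℕ → ℝ)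

/-- the value of the win-rate at first passage to level `e`, when the hitting time is `S` -/
noncomputable def Gv (e S : ℕ) : ℝ := ((S : ℝ) + e) / (2 * S)

lemma psum_full {D : ℕ} (m : Fin D → ℕ) : psum m D = ∑ j, m j := by
  rw [psum, ← Fin.sum_univ_eq_sum_range]
  apply Finset.sum_congr rfl
  intro j _
  unfold extN
  rw [dif_pos j.2]

lemma psum_swap {D : ℕ} (hD : 1 ≤ D) (m : Fin D → ℕ) (i : Fin D) :
    psum (m ∘ Equiv.swap i ⟨D - 1, by omega⟩) (D - 1) = (∑ j, m j) - m i := by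
  set σ := Equiv.swap i (⟨D - 1, by omega⟩ : Fin D)
  have h1 : psum (m ∘ σ) ((D - 1) + 1) = psum (m ∘ σ) (D - 1) + extN (m ∘ σ) (D - 1) :=
    psum_succ _ _
  have hD1 : (D - 1) + 1 = D := by omega
  have h2 : psum (m ∘ σ) D = ∑ j, m j := by
    rw [psum_full]
    exact Equiv.sum_comp σ m
  have h3 : extN (m ∘ σ) (D - 1) = m i := by
    unfold extN
    rw [dif_pos (by omega : D - 1 < D)]
    have : (⟨D - 1, by omega⟩ : Fin D) = σ.symm i := by
      simp [σ, Equiv.symm_swap, Equiv.swap_apply_right]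
    show m (σ ⟨D - 1, by omega⟩) = m i
    have hs : σ ⟨D - 1, by omega⟩ = i := Equiv.swap_apply_right i _
    rw [hs]
  rw [hD1] at h1
  rw [h2, h3] at h1
  omega

lemma mi_le_sum {D : ℕ} (m : Fin D → ℕ) (i : Fin D) : m i ≤ ∑ j, m j :=
  Finset.single_le_sum (fun j _ => Nat.zero_le (m j)) (Finset.mem_univ i)

end analytic

lemma div_bound (e S : ℕ) : 0 ≤ (e:ℝ)/(2*(S:ℝ)) ∧ (e:ℝ)/(2*(S:ℝ)) ≤ (e:ℝ) := by
  rcases Nat.eq_zero_or_pos S with h | h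
  · subst h
    norm_num
  · have h1 : (1:ℝ) ≤ 2*(S:ℝ) := by
      have : (1:ℝ) ≤ (S:ℝ) := by exact_mod_cast h
      linarith
    constructor
    · positivity
    · exact div_le_self (Nat.cast_nonneg e) h1

set_option maxHeartbeats 1000000 in
lemma tsum_main {D : ℕ} (hD : 2 ≤ D) (wr : ℕ → ℝ) (hnn : ∀ n, 0 ≤ wr n) (h0 : wr 0 = 0)
    (h1 : 0 < wr 1) (h3 : 0 < wr 3)
    (hsum : Summable (fun m : Fin D → ℕ => ∏ j, wr (m j))) :
    0 < ∑' m : Fin D → ℕ, (Gv (D-1) (psum m (D-1)) - Gv D (psum m D)) * ∏ j, wr (m j) := by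
  classical
  set μ : (Fin D → ℕ) → ℝ := fun m => ∏ j, wr (m j) with hμ
  set g : (Fin D → ℕ) → ℝ :=
    fun m => ((D:ℝ)-1)/(2*((psum m (D-1) : ℕ):ℝ)) - (D:ℝ)/(2*((psum m D : ℕ):ℝ)) with hg
  have hμnn : ∀ m, 0 ≤ μ m := fun m => Finset.prod_nonneg fun j _ => hnn (m j)
  have hμ0 : ∀ m : Fin D → ℕ, (∃ j, m j = 0) → μ m = 0 := by
    rintro m ⟨j, hj⟩
    exact Finset.prod_eq_zero (Finset.mem_univ j) (by rw [hj, h0])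
  have hμpos : ∀ m : Fin D → ℕ, μ m ≠ 0 → ∀ j, 1 ≤ m j := by
    intro m hm j
    by_contra hj
    exact hm (hμ0 m ⟨j, by omega⟩)
  have hpsum_ge : ∀ m : Fin D → ℕ, (∀ j, 1 ≤ m j) → ∀ e, e ≤ D → e ≤ psum m e := by
    intro m hm e he
    have : ∑ k ∈ Finset.range e, 1 ≤ ∑ k ∈ Finset.range e, extN m k := by
      apply Finset.sum_le_sum
      intro k hk
      have hkD : k < D := lt_of_lt_of_le (Finset.mem_range.mp hk) he
      have : extN m k = m ⟨k, hkD⟩ := dif_pos hkD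
      rw [this]
      exact hm _
    simpa [psum] using this
  have hcongr : ∀ m : Fin D → ℕ,
      (Gv (D-1) (psum m (D-1)) - Gv D (psum m D)) * μ m = g m * μ m := by
    intro m
    by_cases hm : ∀ j, 1 ≤ m j
    · have hS : 1 ≤ psum m (D-1) := le_trans (by omega) (hpsum_ge m hm (D-1) (by omega))
      have hT : 1 ≤ psum m D := le_trans (by omega) (hpsum_ge m hm D le_rfl)
      congr 1
      have hSr : (1:ℝ) ≤ ((psum m (D-1) : ℕ):ℝ) := by exact_mod_cast hS
      have hTr : (1:ℝ) ≤ ((psum m D : ℕ):ℝ) := by exact_mod_cast hT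
      have hcast : ((D - 1 : ℕ) : ℝ) = (D:ℝ) - 1 := by
        have : 1 ≤ D := by omega
        push_cast [this]
        ring
      unfold Gv
      rw [hg, hcast]
      have hS0 : ((psum m (D-1) : ℕ):ℝ) ≠ 0 := by linarith
      have hT0 : ((psum m D : ℕ):ℝ) ≠ 0 := by linarith
      field_simp
      ring
    · push_neg at hm
      obtain ⟨j, hj⟩ := hm
      rw [hμ0 m ⟨j, by omega⟩, mul_zero, mul_zero]
  rw [tsum_congr hcongr]
  have hgb : ∀ m, ‖g m * μ m‖ ≤ (2*(D:ℝ)) * μ m := by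
    intro m
    rw [norm_mul, Real.norm_eq_abs, Real.norm_eq_abs, abs_of_nonneg (hμnn m)]
    apply mul_le_mul_of_nonneg_right ?_ (hμnn m)
    have hA := div_bound (D-1) (psum m (D-1))
    have hB := div_bound D (psum m D)
    have hcast : ((D - 1 : ℕ) : ℝ) = (D:ℝ) - 1 := by
      have : 1 ≤ D := by omega
      push_cast [this]
      ring
    rw [hg]
    rw [abs_le]
    rw [hcast] at hA
    have hDr : (0:ℝ) ≤ (D:ℝ) := Nat.cast_nonneg D
    constructor <;> simp only <;> nlinarith [hA.1, hA.2, hB.1, hB.2]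
  have hsummable : Summable (fun m => g m * μ m) :=
    Summable.of_norm_bounded (hsum.mul_left (2*(D:ℝ))) hgb
  set lastI : Fin D := ⟨D-1, by omega⟩ with hlastI
  set R : Fin D → ((Fin D → ℕ) ≃ (Fin D → ℕ)) :=
    fun i => Equiv.arrowCongr (Equiv.swap i lastI) (Equiv.refl ℕ) with hRdef
  have hR : ∀ (i : Fin D) (m : Fin D → ℕ), R i m = m ∘ (Equiv.swap i lastI) := by
    intro i m
    funext j
    simp [hRdef, Equiv.arrowCongr, Equiv.symm_swap]
  set T : (Fin D → ℕ) → ℕ := fun m => ∑ j, m j with hT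
  set h : Fin D → (Fin D → ℕ) → ℝ :=
    fun i m => ((D:ℝ)-1)/(2*(((T m):ℝ) - (m i : ℝ))) - (D:ℝ)/(2*((T m):ℝ)) with hh
  have hterm_swap : ∀ (i : Fin D) (m : Fin D → ℕ),
      g (R i m) * μ (R i m) = h i m * μ m := by
    intro i m
    have hμR : μ (R i m) = μ m := by
      rw [hR, hμ]
      exact Equiv.prod_comp (Equiv.swap i lastI) (fun j => wr (m j))
    have hps1 : psum (R i m) (D-1) = T m - m i := by
      rw [hR]
      exact psum_swap (by omega) m i
    have hps2 : psum (R i m) D = T m := by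
      rw [hR, psum_full]
      exact Equiv.sum_comp (Equiv.swap i lastI) m
    have hcast : ((T m - m i : ℕ) : ℝ) = ((T m : ℕ):ℝ) - (m i : ℝ) := by
      exact_mod_cast Nat.cast_sub (mi_le_sum m i)
    rw [hμR]
    simp only [hg, hh]
    rw [hps1, hps2, hcast]
  have hsummR : ∀ i : Fin D, Summable (fun m => g (R i m) * μ (R i m)) := by
    intro i
    have := (Equiv.summable_iff (R i) (f := fun m => g m * μ m)).mpr hsummable
    exact this
  have htsumR : ∀ i : Fin D, (∑' m, g (R i m) * μ (R i m)) = ∑' m, g m * μ m := by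
    intro i
    exact Equiv.tsum_eq (R i) (fun m => g m * μ m)
  have hkey : (D:ℝ) * (∑' m, g m * μ m) = ∑' m : Fin D → ℕ, ∑ i : Fin D, h i m * μ m := by
    have e1 : ∑ i : Fin D, (∑' m, g (R i m) * μ (R i m)) = (D:ℝ) * (∑' m, g m * μ m) := by
      rw [Finset.sum_congr rfl fun i _ => htsumR i, Finset.sum_const, Finset.card_univ,
        Fintype.card_fin, nsmul_eq_mul]
    rw [← e1]
    rw [← Summable.tsum_finsetSum (fun i _ => hsummR i)]
    apply tsum_congr
    intro m
    exact Finset.sum_congr rfl fun i _ => hterm_swap i m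
  have hHnn : ∀ m : Fin D → ℕ, 0 ≤ ∑ i : Fin D, h i m * μ m := by
    intro m
    rw [← Finset.sum_mul]
    by_cases hm : μ m = 0
    · rw [hm, mul_zero]
    · apply mul_nonneg ?_ (hμnn m)
      have hm1 := hμpos m hm
      have hx : ∀ i : Fin D, (1:ℝ) ≤ (m i : ℝ) := fun i => by exact_mod_cast hm1 i
      have hcast : ((T m : ℕ):ℝ) = ∑ j : Fin D, ((m j : ℕ):ℝ) := by
        rw [hT]
        push_cast
        rfl
      have hsumeq : ∑ i : Fin D, h i m
          = ∑ i : Fin D, (((D:ℝ)-1)/(2*((∑ j : Fin D, ((m j : ℕ):ℝ)) - ((m i : ℕ):ℝ)))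
            - (D:ℝ)/(2*(∑ j : Fin D, ((m j : ℕ):ℝ)))) := by
        apply Finset.sum_congr rfl
        intro i _
        simp only [hh]
        rw [hcast]
      rw [hsumeq]
      exact sum_frac_nonneg' hD (fun i => ((m i : ℕ):ℝ)) hx
  have hsummH : Summable (fun m : Fin D → ℕ => ∑ i : Fin D, h i m * μ m) := by
    have : Summable (fun m : Fin D → ℕ => ∑ i : Fin D, g (R i m) * μ (R i m)) :=
      summable_sum fun i _ => hsummR i
    apply this.congr
    intro m
    exact Finset.sum_congr rfl fun i _ => hterm_swap i m
  set mstar : Fin D → ℕ := fun j => if j = lastI then 3 else 1 with hmstar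
  have hμstar : 0 < μ mstar := by
    apply Finset.prod_pos
    intro j _
    by_cases hj : j = lastI <;> simp [hmstar, hj, h1, h3]
  have hHstar : 0 < ∑ i : Fin D, h i mstar * μ mstar := by
    rw [← Finset.sum_mul]
    apply mul_pos ?_ hμstar
    have hx : ∀ i : Fin D, (1:ℝ) ≤ (mstar i : ℝ) := by
      intro i
      by_cases hi : i = lastI <;> simp [hmstar, hi]
    have hcast : ((T mstar : ℕ):ℝ) = ∑ j : Fin D, ((mstar j : ℕ):ℝ) := by
      rw [hT]; push_cast; rfl
    have hne : ∃ i j : Fin D, (mstar i : ℝ) ≠ (mstar j : ℝ) := by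
      refine ⟨⟨0, by omega⟩, lastI, ?_⟩
      have h01 : (⟨0, by omega⟩ : Fin D) ≠ lastI := by
        rw [hlastI]
        intro hcontra
        have := congrArg Fin.val hcontra
        simp at this
        omega
      simp [hmstar, h01]
    have hsumeq : ∑ i : Fin D, h i mstar
        = ∑ i : Fin D, (((D:ℝ)-1)/(2*((∑ j : Fin D, ((mstar j : ℕ):ℝ)) - ((mstar i : ℕ):ℝ)))
          - (D:ℝ)/(2*(∑ j : Fin D, ((mstar j : ℕ):ℝ)))) := by
      apply Finset.sum_congr rfl
      intro i _
      simp only [hh]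
      rw [hcast]
    rw [hsumeq]
    exact sum_frac_pos hD (fun i => ((mstar i : ℕ):ℝ)) hx hne
  have hHpos : 0 < ∑' m : Fin D → ℕ, ∑ i : Fin D, h i m * μ m :=
    Summable.tsum_pos hsummH hHnn mstar hHstar
  rw [← hkey] at hHpos
  have hD0 : (0:ℝ) < (D:ℝ) := by positivity
  nlinarith [hHpos, hD0]

section assembly
variable {Ω : Type*} [MeasurableSpace Ω] {P : Measure Ω} [IsProbabilityMeasure P]
  {p : ℝ} {X : ℕ → Ω → ℤ}

omit [IsProbabilityMeasure P] in
lemma walkSum_measurable (hmeas : ∀ n, Measurable (X n)) (n : ℕ) :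
    Measurable (fun ω => walkSum X n ω) := by
  unfold walkSum
  exact Finset.measurable_sum _ fun k _ => hmeas k

omit [IsProbabilityMeasure P] in
lemma hitTime_measurable (hmeas : ∀ n, Measurable (X n)) (z : ℤ) :
    Measurable (fun ω => hitTime X z ω) := by
  apply measurable_to_countable'
  intro y
  by_cases hy : y = 0
  · subst hy
    have hset : (fun ω => hitTime X z ω) ⁻¹' {0}
        = {ω | walkSum X 0 ω = z} ∪ ⋂ (k : ℕ), {ω | walkSum X k ω = z}ᶜ := by
      ext ω
      simp only [Set.mem_preimage, Set.mem_singleton_iff, Set.mem_union, Set.mem_iInter,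
        Set.mem_compl_iff, Set.mem_setOf_eq]
      unfold hitTime
      rw [Nat.sInf_eq_zero]
      constructor
      · rintro (h | h)
        · exact Or.inl h
        · right
          intro k
          intro hk
          have : k ∈ {n : ℕ | walkSum X n ω = z} := hk
          rw [h] at this
          exact this
      · rintro (h | h)
        · exact Or.inl h
        · right
          ext k
          simp [h k]
    rw [hset]
    exact ((walkSum_measurable hmeas 0) (MeasurableSet.of_discrete (s := {z}))).union
      (MeasurableSet.iInter fun k =>
        ((walkSum_measurable hmeas k) (MeasurableSet.of_discrete (s := {z}))).compl)
  · have hset : (fun ω => hitTime X z ω) ⁻¹' {y}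
        = {ω | walkSum X y ω = z} ∩ ⋂ (k : ℕ) (_ : k < y), {ω | walkSum X k ω = z}ᶜ := by
      ext ω
      simp only [Set.mem_preimage, Set.mem_singleton_iff, Set.mem_inter_iff, Set.mem_iInter,
        Set.mem_compl_iff, Set.mem_setOf_eq]
      constructor
      · intro h
        have hne : {n : ℕ | walkSum X n ω = z}.Nonempty := by
          by_contra hS
          rw [Set.not_nonempty_iff_eq_empty] at hS
          unfold hitTime at h
          rw [hS, Nat.sInf_empty] at h
          exact hy h.symm
        have hmem := Nat.sInf_mem hne
        refine ⟨by rw [← h]; exact hmem, fun k hk hwk => ?_⟩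
        have := Nat.sInf_le (show k ∈ {n : ℕ | walkSum X n ω = z} from hwk)
        unfold hitTime at h
        omega
      · rintro ⟨h1, h2⟩
        have hle : hitTime X z ω ≤ y :=
          Nat.sInf_le (show y ∈ {n : ℕ | walkSum X n ω = z} from h1)
        have hne : {n : ℕ | walkSum X n ω = z}.Nonempty := ⟨y, h1⟩
        have hmem := Nat.sInf_mem hne
        have : ¬ (hitTime X z ω < y) := fun hlt => h2 _ hlt hmem
        omega
    rw [hset]
    exact ((walkSum_measurable hmeas y) (MeasurableSet.of_discrete (s := {z}))).inter
      (MeasurableSet.iInter fun k => MeasurableSet.iInter fun _ =>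
        ((walkSum_measurable hmeas k) (MeasurableSet.of_discrete (s := {z}))).compl)

omit [IsProbabilityMeasure P] in
lemma wins_measurable (hmeas : ∀ n, Measurable (X n)) (n : ℕ) :
    Measurable (fun ω => wins X n ω) := by
  have : (fun ω => wins X n ω)
      = fun ω => ∑ k ∈ Finset.range n, if X k ω = 1 then 1 else 0 := by
    funext ω
    exact Finset.card_filter _ _
  rw [this]
  apply Finset.measurable_sum
  intro k _
  exact Measurable.ite ((hmeas k) (MeasurableSet.of_discrete (s := {1})))
    measurable_const measurable_const

omit [IsProbabilityMeasure P] in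
lemma winsAt_measurable (hmeas : ∀ n, Measurable (X n)) (z : ℤ) :
    Measurable (fun ω => wins X (hitTime X z ω) ω) := by
  apply measurable_to_countable'
  intro y
  have hset : (fun ω => wins X (hitTime X z ω) ω) ⁻¹' {y}
      = ⋃ (n : ℕ), ((fun ω => hitTime X z ω) ⁻¹' {n} ∩ {ω | wins X n ω = y}) := by
    ext ω
    simp only [Set.mem_preimage, Set.mem_singleton_iff, Set.mem_iUnion, Set.mem_inter_iff,
      Set.mem_setOf_eq]
    constructor
    · intro h
      exact ⟨hitTime X z ω, rfl, h⟩
    · rintro ⟨n, hn, hw⟩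
      rw [hn]
      exact hw
  rw [hset]
  exact MeasurableSet.iUnion fun n =>
    ((hitTime_measurable hmeas z) (MeasurableSet.of_discrete (s := {n}))).inter
      ((wins_measurable hmeas n) (MeasurableSet.of_discrete (s := {y})))

omit [IsProbabilityMeasure P] in
lemma integrand_measurable (hmeas : ∀ n, Measurable (X n)) (z : ℤ) :
    Measurable (fun ω => (wins X (hitTime X z ω) ω : ℝ) / (hitTime X z ω : ℝ)) := by
  apply Measurable.div
  · exact Measurable.comp Measurable.of_discrete (winsAt_measurable hmeas z)
  · exact Measurable.comp Measurable.of_discrete (hitTime_measurable hmeas z)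

omit [IsProbabilityMeasure P] in
lemma wins_le (ω : Ω) (n : ℕ) : wins X n ω ≤ n := by
  calc wins X n ω ≤ (Finset.range n).card := Finset.card_filter_le _ _
    _ = n := Finset.card_range n

lemma integrand_integrable (hmeas : ∀ n, Measurable (X n)) (z : ℤ) :
    Integrable (fun ω => (wins X (hitTime X z ω) ω : ℝ) / (hitTime X z ω : ℝ)) P := by
  apply Integrable.mono' (integrable_const (1:ℝ))
    (integrand_measurable hmeas z).aestronglyMeasurable
  apply Filter.Eventually.of_forall
  intro ω
  set n := hitTime X z ω
  rw [Real.norm_eq_abs]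
  rcases Nat.eq_zero_or_pos n with h | h
  · rw [h]
    norm_num
  · have h1 : (0:ℝ) < (n:ℝ) := by exact_mod_cast h
    have h2 : (wins X n ω : ℝ) ≤ (n : ℝ) := by exact_mod_cast wins_le ω n
    have h3 : (0:ℝ) ≤ (wins X n ω : ℝ) := Nat.cast_nonneg _
    rw [abs_of_nonneg (div_nonneg h3 h1.le)]
    exact div_le_one_of_le₀ h2 h1.le

end assembly

section assembly2
variable {Ω : Type*} [MeasurableSpace Ω] {P : Measure Ω} [IsProbabilityMeasure P]
  {p : ℝ} {X : ℕ → Ω → ℤ}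

lemma ev_prob (hmeas : ∀ n, Measurable (X n))
    (hindep : iIndepFun X P)
    (hup : ∀ n, P {ω | X n ω = 1} = ENNReal.ofReal p)
    (hdown : ∀ n, P {ω | X n ω = -1} = ENNReal.ofReal (1 - p))
    {D : ℕ} (m : Fin D → ℕ) :
    P (Ev X m D) = ∏ j ∈ Finset.range D, w p (extN m j) := by
  have h := ev_cyl_prob hmeas hindep hup hdown m D 0 (fun _ => true)
  have hcyl : Cyl X (psum m D) 0 (fun _ => true) = Set.univ := by
    ext ω
    simp [Cyl]
  have hW : W p 0 (fun _ => true) = 1 := by simp [W]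
  rw [hcyl, Set.inter_univ, hW, mul_one] at h
  exact h

omit [IsProbabilityMeasure P] in
lemma ev_disjoint {D : ℕ} :
    Pairwise (Function.onFun Disjoint (fun m : Fin D → ℕ => Ev X m D)) := by
  intro m m' hne
  rw [Function.onFun]
  rw [Set.disjoint_left]
  intro ω h1 h2
  apply hne
  have hps : ∀ e ≤ D, psum m e = psum m' e := by
    intro e he
    have := ev_hitTime h1 e he
    have := ev_hitTime h2 e he
    omega
  funext j
  have h3 := hps (j + 1) j.2
  have h4 := hps j j.2.le
  rw [psum_succ, psum_succ] at h3
  have h5 : extN m j = extN m' j := by omega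
  have h6 : extN m (j : ℕ) = m j := by
    unfold extN
    rw [dif_pos j.2]
  have h7 : extN m' (j : ℕ) = m' j := by
    unfold extN
    rw [dif_pos j.2]
  rw [h6, h7] at h5
  exact h5

lemma good_ae (hmeas : ∀ n, Measurable (X n))
    (hup : ∀ n, P {ω | X n ω = 1} = ENNReal.ofReal p)
    (hdown : ∀ n, P {ω | X n ω = -1} = ENNReal.ofReal (1 - p))
    (hp : p ∈ Set.Ico (1/2 : ℝ) 1)
    (hfin : ∀ e : ℕ, ∀ᵐ ω ∂P, ∃ n, walkSum X n ω = (e : ℤ)) :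
    ∀ᵐ ω ∂P, ω ∈ good X := by
  have hstep : ∀ n : ℕ, ∀ᵐ ω ∂P, X n ω = 1 ∨ X n ω = -1 := by
    intro n
    have hm1 : MeasurableSet {ω | X n ω = 1} := (hmeas n) (MeasurableSet.of_discrete (s := {1}))
    have hm2 : MeasurableSet {ω | X n ω = -1} := (hmeas n) (MeasurableSet.of_discrete (s := {-1}))
    have hdisj : Disjoint {ω | X n ω = 1} {ω | X n ω = -1} := by
      rw [Set.disjoint_left]
      intro ω h1 h2
      simp only [Set.mem_setOf_eq] at h1 h2
      rw [h1] at h2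
      norm_num at h2
    have hun : P ({ω | X n ω = 1} ∪ {ω | X n ω = -1}) = 1 := by
      rw [measure_union hdisj hm2, hup n, hdown n]
      rw [← ENNReal.ofReal_add (by linarith [hp.1]) (by linarith [hp.2])]
      norm_num
    have hcompl : P ({ω | X n ω = 1} ∪ {ω | X n ω = -1})ᶜ = 0 := by
      rw [measure_compl (hm1.union hm2) (measure_ne_top P _), hun]
      simp
    rw [ae_iff]
    apply measure_mono_null ?_ hcompl
    intro ω hω
    simp only [Set.mem_compl_iff, Set.mem_union, Set.mem_setOf_eq] at hω ⊢
    tauto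
  have h1 : ∀ᵐ ω ∂P, ∀ n : ℕ, X n ω = 1 ∨ X n ω = -1 := ae_all_iff.mpr hstep
  have h2 : ∀ᵐ ω ∂P, ∀ e : ℕ, ∃ n, walkSum X n ω = (e : ℤ) := ae_all_iff.mpr hfin
  filter_upwards [h1, h2] with ω hω1 hω2
  exact ⟨hω1, hω2⟩

lemma w_le_one (hmeas : ∀ n, Measurable (X n))
    (hindep : iIndepFun X P)
    (hup : ∀ n, P {ω | X n ω = 1} = ENNReal.ofReal p)
    (hdown : ∀ n, P {ω | X n ω = -1} = ENNReal.ofReal (1 - p))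
    (n : ℕ) : w p n ≤ 1 := by
  have h := ev_prob hmeas hindep hup hdown (D := 1) (fun _ => n)
  have hext : extN (D := 1) (fun _ => n) 0 = n := by
    unfold extN
    rw [dif_pos (by omega : (0:ℕ) < 1)]
  rw [Finset.prod_range_one, hext] at h
  rw [← h]
  exact prob_le_one

lemma w_zero : w p 0 = 0 := by
  have hemp : FPfin 0 = ∅ := by
    ext t
    simp only [mem_FPfin, Finset.notMem_empty, iff_false]
    intro h
    have : pSum (extB t) 0 = 0 := by simp [pSum]
    rw [this] at h
    exact one_ne_zero h.1.symm
  unfold w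
  rw [hemp, Finset.sum_empty]

lemma w_one_ge (hp : p ∈ Set.Ico (1/2 : ℝ) 1) : ENNReal.ofReal p ≤ w p 1 := by
  have hle : W p 1 (extB patt1) ≤ w p 1 :=
    Finset.single_le_sum (f := fun t : Fin 1 → Bool => W p 1 (extB t))
      (fun t _ => zero_le) patt1_mem
  have : W p 1 (extB patt1) = ENNReal.ofReal p := by
    unfold W
    rw [Finset.prod_range_one]
    have h1 : extB patt1 0 = true := by simp [extB, patt1]
    rw [h1]
    rfl
  rw [← this]
  exact hle

lemma w_three_ge (hp : p ∈ Set.Ico (1/2 : ℝ) 1) :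
    ENNReal.ofReal (1 - p) * (ENNReal.ofReal p * ENNReal.ofReal p) ≤ w p 3 := by
  have hle : W p 3 (extB patt3) ≤ w p 3 :=
    Finset.single_le_sum (f := fun t : Fin 3 → Bool => W p 3 (extB t))
      (fun t _ => zero_le) patt3_mem
  have heq : W p 3 (extB patt3)
      = ENNReal.ofReal (1 - p) * (ENNReal.ofReal p * ENNReal.ofReal p) := by
    unfold W
    rw [Finset.prod_range_succ, Finset.prod_range_succ, Finset.prod_range_one]
    have h0 : extB patt3 0 = false := by simp [extB, patt3]
    have h1 : extB patt3 1 = true := by simp [extB, patt3]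
    have h2 : extB patt3 2 = true := by simp [extB, patt3]
    rw [h0, h1, h2]
    unfold pv
    simp only [if_true, if_false, Bool.false_eq_true]
    ring
  rw [← heq]
  exact hle

omit [IsProbabilityMeasure P] in
lemma ev_integrand_value {D : ℕ} {m : Fin D → ℕ} {ω : Ω} (h : ω ∈ Ev X m D)
    {e : ℕ} (he1 : 1 ≤ e) (heD : e ≤ D) :
    (wins X (hitTime X (e : ℤ) ω) ω : ℝ) / (hitTime X (e : ℤ) ω : ℝ) = Gv e (psum m e) := by
  have hN := ev_hitTime h e heD
  have hpos : ∀ j < D, 1 ≤ extN m j := ev_extN_pos h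
  have hge : e ≤ psum m e := by
    have : ∑ k ∈ Finset.range e, 1 ≤ ∑ k ∈ Finset.range e, extN m k := by
      apply Finset.sum_le_sum
      intro k hk
      exact hpos k (lt_of_lt_of_le (Finset.mem_range.mp hk) heD)
    simpa [psum] using this
  have hSpos : 1 ≤ psum m e := le_trans he1 hge
  have hsteps : ∀ k < psum m e, X k ω = 1 ∨ X k ω = -1 := by
    intro k hk
    exact ev_steps h k (lt_of_lt_of_le hk (psum_mono m heD))
  have hwid := wins_identity (X := X) (ω := ω) (n := psum m e) hsteps
  have hws : walkSum X (psum m e) ω = (e : ℤ) := ev_walkSum h e heD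
  rw [hws] at hwid
  rw [hN]
  have hSr : (0:ℝ) < ((psum m e : ℕ):ℝ) := by
    have : (1:ℝ) ≤ ((psum m e : ℕ):ℝ) := by exact_mod_cast hSpos
    linarith
  have hwr : (wins X (psum m e) ω : ℝ) = (((psum m e : ℕ):ℝ) + (e:ℝ)) / 2 := by
    have : (2:ℝ) * (wins X (psum m e) ω : ℝ) = ((psum m e : ℕ):ℝ) + (e:ℝ) := by
      exact_mod_cast hwid
    linarith
  rw [hwr]
  unfold Gv
  field_simp
  try ring

end assembly2

end Stmt8

open Stmt8 in
/-- The expected win rate at the first-passage time is strictly decreasing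
in the threshold `d`. -/
theorem stmt_8 {Ω : Type*} [MeasurableSpace Ω] (P : Measure Ω) [IsProbabilityMeasure P]
    (p : ℝ) (hp : p ∈ Set.Ico (1/2 : ℝ) 1)
    (X : ℕ → Ω → ℤ) (hmeas : ∀ n, Measurable (X n))
    (hindep : iIndepFun X P)
    (hup : ∀ n, P {ω | X n ω = 1} = ENNReal.ofReal p)
    (hdown : ∀ n, P {ω | X n ω = -1} = ENNReal.ofReal (1 - p))
    (d : ℕ) (hd : 1 ≤ d)
    (hfin : ∀ e : ℕ, ∀ᵐ ω ∂P, ∃ n, walkSum X n ω = (e : ℤ)) :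
    ∫ ω, (wins X (hitTime X (d : ℤ) ω) ω : ℝ) / (hitTime X (d : ℤ) ω) ∂P
      > ∫ ω, (wins X (hitTime X ((d : ℤ) + 1) ω) ω : ℝ) / (hitTime X ((d : ℤ) + 1) ω) ∂P := by
  classical
  set D := d + 1 with hDdef
  have hD2 : 2 ≤ D := by omega
  set f1 : Ω → ℝ := fun ω => (wins X (hitTime X (d : ℤ) ω) ω : ℝ) / (hitTime X (d : ℤ) ω) with hf1
  set f2 : Ω → ℝ :=
    fun ω => (wins X (hitTime X ((d : ℤ) + 1) ω) ω : ℝ) / (hitTime X ((d : ℤ) + 1) ω) with hf2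
  have hint1 : Integrable f1 P := integrand_integrable hmeas (d : ℤ)
  have hint2 : Integrable f2 P := integrand_integrable hmeas ((d : ℤ) + 1)
  set F : Ω → ℝ := fun ω => f1 ω - f2 ω with hF
  have hintF : Integrable F P := hint1.sub hint2
  set A : (Fin D → ℕ) → Set Ω := fun m => Ev X m D with hA
  have hAmeas : ∀ m, MeasurableSet (A m) := fun m => ev_measurable hmeas m D
  have hAdisj : Pairwise (Function.onFun Disjoint A) := ev_disjoint
  have hgood := good_ae hmeas hup hdown hp hfin
  have hcompl : P ((⋃ m, A m)ᶜ) = 0 := by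
    apply measure_mono_null ?_ (ae_iff.mp hgood)
    intro ω hω
    simp only [Set.mem_compl_iff, Set.mem_iUnion, not_exists] at hω
    simp only [Set.mem_setOf_eq]
    intro hg
    exact hω (mOf X D ω) (good_mem_ev hg D)
  have hsplit : ∫ ω, F ω ∂P = ∑' m : Fin D → ℕ, ∫ ω in A m, F ω ∂P := by
    have h1 : ∫ ω, F ω ∂P = ∫ ω in ⋃ m, A m, F ω ∂P := by
      rw [← integral_add_compl (MeasurableSet.iUnion hAmeas) hintF]
      have hz : ∫ ω in (⋃ m, A m)ᶜ, F ω ∂P = 0 := by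
        rw [Measure.restrict_eq_zero.mpr hcompl, integral_zero_measure]
      rw [hz, add_zero]
    rw [h1, integral_iUnion hAmeas hAdisj hintF.integrableOn]
  have hvals : ∀ m : Fin D → ℕ, ∫ ω in A m, F ω ∂P
      = (Gv d (psum m d) - Gv D (psum m D)) * (P (A m)).toReal := by
    intro m
    have hEq : Set.EqOn F (fun _ => Gv d (psum m d) - Gv D (psum m D)) (A m) := by
      intro ω hω
      have e1 : f1 ω = Gv d (psum m d) :=
        ev_integrand_value hω hd (by omega)
      have e2 : f2 ω = Gv D (psum m D) := by
        have hcast : ((D : ℕ) : ℤ) = (d : ℤ) + 1 := by rw [hDdef]; push_cast; ring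
        have h3 := ev_integrand_value hω (e := D) (by omega) le_rfl
        rw [hcast] at h3
        exact h3
      simp only [hF, e1, e2]
    rw [setIntegral_congr_fun (hAmeas m) hEq, setIntegral_const, smul_eq_mul, mul_comm, measureReal_def]
  set wr : ℕ → ℝ := fun n => (w p n).toReal with hwr
  have hPAr : ∀ m : Fin D → ℕ, (P (A m)).toReal = ∏ j : Fin D, wr (m j) := by
    intro m
    rw [show P (A m) = ∏ j ∈ Finset.range D, w p (extN m j) from
      ev_prob hmeas hindep hup hdown m, ENNReal.toReal_prod]
    rw [← Fin.prod_univ_eq_prod_range (fun j => (w p (extN m j)).toReal) D]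
    apply Finset.prod_congr rfl
    intro j _
    have hext : extN m (j : ℕ) = m j := by
      unfold extN
      rw [dif_pos j.2]
    rw [hext]
  have htsumA : ∑' m : Fin D → ℕ, P (A m) ≠ ⊤ := by
    rw [← measure_iUnion hAdisj hAmeas]
    exact measure_ne_top P _
  have hsumwr : Summable (fun m : Fin D → ℕ => ∏ j, wr (m j)) := by
    have h4 := ENNReal.summable_toReal htsumA
    exact h4.congr hPAr
  have hnn : ∀ n, 0 ≤ wr n := fun n => ENNReal.toReal_nonneg
  have h0 : wr 0 = 0 := by rw [hwr]; simp [w_zero]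
  have hwfin : ∀ n, w p n ≠ ⊤ := fun n =>
    ne_top_of_le_ne_top ENNReal.one_ne_top (w_le_one hmeas hindep hup hdown n)
  have h1 : 0 < wr 1 := by
    apply ENNReal.toReal_pos ?_ (hwfin 1)
    have hlow := w_one_ge (p := p) hp
    have hpos : (0:ENNReal) < ENNReal.ofReal p := ENNReal.ofReal_pos.mpr (by linarith [hp.1])
    exact (lt_of_lt_of_le hpos hlow).ne'
  have h3 : 0 < wr 3 := by
    apply ENNReal.toReal_pos ?_ (hwfin 3)
    have hlow := w_three_ge (p := p) hp
    have hq : (0:ℝ) < 1 - p := by linarith [hp.2]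
    have hppos : (0:ℝ) < p := by linarith [hp.1]
    have hne : ENNReal.ofReal (1 - p) * (ENNReal.ofReal p * ENNReal.ofReal p) ≠ 0 :=
      mul_ne_zero (ENNReal.ofReal_pos.mpr hq).ne'
        (mul_ne_zero (ENNReal.ofReal_pos.mpr hppos).ne' (ENNReal.ofReal_pos.mpr hppos).ne')
    exact (lt_of_lt_of_le (pos_iff_ne_zero.mpr hne) hlow).ne'
  have hmain := tsum_main hD2 wr hnn h0 h1 h3 hsumwr
  have hd1 : D - 1 = d := by omega
  rw [hd1] at hmain
  have hFpos : 0 < ∫ ω, F ω ∂P := by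
    rw [hsplit, tsum_congr hvals]
    have heq : ∀ m : Fin D → ℕ, (Gv d (psum m d) - Gv D (psum m D)) * (P (A m)).toReal
        = (Gv d (psum m d) - Gv D (psum m D)) * ∏ j, wr (m j) := by
      intro m
      rw [hPAr m]
    rw [tsum_congr heq]
    exact hmain
  have hsub : ∫ ω, F ω ∂P = (∫ ω, f1 ω ∂P) - ∫ ω, f2 ω ∂P := by
    rw [hF]
    exact integral_sub hint1 hint2
  rw [hsub] at hFpos
  linarith
end
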